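/- arXiv:1803.01398 — 9 statements merged into one kernel-verified Lean document; each statement's English description precedes it below -/
import Mathlib

section
/- Let a, b ∈ ℂ with a ≠ b, let n ≥ 2 be an integer, and let z_1, …, z_n ∈ ℂ be such that exp(a·(z_j − z_i)) ≠ exp(b·(z_j − z_i)) for all i ≠ j. Then ∑_{i=1}^n ∏_{j≠i} (a·exp(b·(z_j − z_i)) − b·exp(a·(z_j − z_i)))/(exp(a·(z_j − z_i)) − exp(b·(z_j − z_i))) = (−1)^{n−1}·(aⁿ − bⁿ)/(a − b). Equivalently, the Todd function f(z) = (e^{az} − e^{bz})/(a·e^{bz} − b·e^{az}) is a solution of the Hirzebruch functional equation for every n, with constant c satisfying (−1)ⁿ·c = −(aⁿ − bⁿ)/(a − b). -/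
open Complex Finset

section Aux

open Polynomial

variable {F : Type*} [Field F] {ι : Type*} [DecidableEq ι]

lemma coeff_basis_aux (s : Finset ι) (v : ι → F) {i : ι} (hi : i ∈ s) :
    (Lagrange.basis s v i).coeff (s.card - 1) = ∏ j ∈ s.erase i, (v i - v j)⁻¹ := by
  have h : ((s.erase i).card * 1) = s.card - 1 := by
    rw [mul_one, Finset.card_erase_of_mem hi]
  rw [Lagrange.basis, ← h, Polynomial.coeff_prod_of_natDegree_le]
  · refine Finset.prod_congr rfl fun j _ => ?_
    rw [Lagrange.basisDivisor]
    simp [coeff_C_mul, coeff_sub, coeff_X_one, coeff_C]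
  · intro j _
    rw [Lagrange.basisDivisor]
    refine le_trans (natDegree_mul_le) ?_
    simp [natDegree_X_sub_C]

lemma coeff_interpolate_aux (s : Finset ι) (v : ι → F) (f : ι → F) :
    (Lagrange.interpolate s v f).coeff (s.card - 1)
      = ∑ i ∈ s, f i / ∏ j ∈ s.erase i, (v i - v j) := by
  rw [Lagrange.interpolate_apply, Polynomial.finset_sum_coeff]
  refine Finset.sum_congr rfl fun i hi => ?_
  rw [Polynomial.coeff_C_mul, coeff_basis_aux s v hi]
  simp [div_eq_mul_inv, Finset.prod_inv_distrib]

lemma divided_diff_aux {s : Finset ι} {v : ι → F} (hinj : Set.InjOn v s) (P : F[X])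
    (hdeg : P.degree < s.card) :
    P.coeff (s.card - 1) = ∑ i ∈ s, P.eval (v i) / ∏ j ∈ s.erase i, (v i - v j) :=
  calc P.coeff (s.card - 1)
      = (Lagrange.interpolate s v (fun i => P.eval (v i))).coeff (s.card - 1) := by
        conv_lhs => rw [Lagrange.eq_interpolate hinj hdeg]
    _ = _ := coeff_interpolate_aux s v _

end Aux

/-- The Todd function `f(z) = (e^{az} - e^{bz})/(a e^{bz} - b e^{az})` solves the Hirzebruch
functional equation for every `n ≥ 2`, with constant `c = (-1)^{n-1} (aⁿ - bⁿ)/(a - b)`. -/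
theorem todd_function_solves_hirzebruch (a b : ℂ) (hab : a ≠ b) (n : ℕ) (hn : 2 ≤ n)
    (z : Fin n → ℂ)
    (hz : ∀ i j : Fin n, i ≠ j →
      Complex.exp (a * (z j - z i)) ≠ Complex.exp (b * (z j - z i))) :
    ∑ i : Fin n, ∏ j ∈ univ.erase i,
        (a * Complex.exp (b * (z j - z i)) - b * Complex.exp (a * (z j - z i))) /
          (Complex.exp (a * (z j - z i)) - Complex.exp (b * (z j - z i)))
      = (-1) ^ (n - 1) * (a ^ n - b ^ n) / (a - b) := by
  classical
  have hab' : a - b ≠ 0 := sub_ne_zero.mpr hab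
  set u : Fin n → ℂ := fun i => Complex.exp ((a - b) * z i) with hu
  have hu0 : ∀ i, u i ≠ 0 := fun i => Complex.exp_ne_zero _
  have hkey : ∀ i j : Fin n, Complex.exp (a * (z j - z i)) * u i
      = Complex.exp (b * (z j - z i)) * u j := by
    intro i j
    simp only [hu]
    rw [← Complex.exp_add, ← Complex.exp_add]
    congr 1; ring
  have huinj : Function.Injective u := by
    intro i j hij
    by_contra hne
    apply hz i j hne
    have h := hkey i j
    rw [hij] at h
    exact mul_right_cancel₀ (hu0 j) h
  have hsub : ∀ i j : Fin n, i ≠ j → u i - u j ≠ 0 :=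
    fun i j hij => sub_ne_zero.mpr fun h => hij (huinj h)
  -- Step 1: rewrite each summand in terms of u
  have hterm : ∀ i : Fin n, (∏ j ∈ univ.erase i,
      (a * Complex.exp (b * (z j - z i)) - b * Complex.exp (a * (z j - z i))) /
        (Complex.exp (a * (z j - z i)) - Complex.exp (b * (z j - z i))))
      = ∏ j ∈ univ.erase i, (a * u i - b * u j) / (u j - u i) := by
    intro i
    refine Finset.prod_congr rfl fun j hj => ?_
    have hij : j ≠ i := (Finset.mem_erase.mp hj).1
    have h1 : Complex.exp (a * (z j - z i)) - Complex.exp (b * (z j - z i)) ≠ 0 :=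
      sub_ne_zero.mpr (hz i j hij.symm)
    have h2 : u j - u i ≠ 0 := hsub j i hij
    rw [div_eq_div_iff h1 h2]
    linear_combination (b - a) * hkey i j
  simp only [hterm]
  -- the polynomial Q(X) = ∏ⱼ (aX - b uⱼ)
  set Q : Polynomial ℂ := ∏ j : Fin n, (Polynomial.C a * Polynomial.X - Polynomial.C (b * u j))
    with hQ
  have hfac : ∀ c : ℂ, (Polynomial.C a * Polynomial.X - Polynomial.C c).natDegree ≤ 1 := by
    intro c
    refine le_trans (Polynomial.natDegree_sub_le _ _) (max_le ?_ ?_)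
    · exact le_trans (Polynomial.natDegree_mul_le) (by simp)
    · simp
  have hQeval : ∀ x : ℂ, Q.eval x = ∏ j : Fin n, (a * x - b * u j) := by
    intro x; simp [hQ, Polynomial.eval_prod]
  have hQdeg : Q.degree < ((Finset.univ : Finset (Option (Fin n))).card : WithBot ℕ) := by
    have h1 : Q.natDegree ≤ n := by
      refine le_trans (Polynomial.natDegree_prod_le _ _) ?_
      have h2 := Finset.sum_le_sum (s := (Finset.univ : Finset (Fin n)))
        (f := fun j => (Polynomial.C a * Polynomial.X - Polynomial.C (b * u j)).natDegree)
        (g := fun _ => 1) (fun j _ => hfac (b * u j))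
      simpa using h2
    have h2 : (Finset.univ : Finset (Option (Fin n))).card = n + 1 := by simp
    rw [h2]
    calc Q.degree ≤ (Q.natDegree : WithBot ℕ) := Polynomial.degree_le_natDegree
      _ ≤ (n : WithBot ℕ) := by exact_mod_cast h1
      _ < ((n + 1 : ℕ) : WithBot ℕ) := by exact_mod_cast Nat.lt_succ_self n
  have hQcoeff : Q.coeff n = a ^ n := by
    have h := Polynomial.coeff_prod_of_natDegree_le
      (s := (Finset.univ : Finset (Fin n)))
      (fun j => Polynomial.C a * Polynomial.X - Polynomial.C (b * u j)) 1
      (fun j _ => hfac _)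
    simp only [Finset.card_univ, Fintype.card_fin, mul_one] at h
    rw [hQ, h]
    have : ∀ j : Fin n,
        (Polynomial.C a * Polynomial.X - Polynomial.C (b * u j)).coeff 1 = a := by
      intro j
      simp [Polynomial.coeff_sub, Polynomial.coeff_C_mul, Polynomial.coeff_C]
    simp [this]
  -- nodes: 0 and the uᵢ
  set v : Option (Fin n) → ℂ := fun o => Option.elim o 0 u with hv
  have hvinj : Set.InjOn v ((Finset.univ : Finset (Option (Fin n))) : Set (Option (Fin n))) := by
    intro o _ o' _ h
    match o, o' with
    | none, none => rfl
    | none, some i => exact absurd h.symm (hu0 i)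
    | some i, none => exact absurd h (hu0 i)
    | some i, some j => exact congrArg some (huinj h)
  have hdd := divided_diff_aux hvinj Q hQdeg
  have hcard : (Finset.univ : Finset (Option (Fin n))).card = n + 1 := by simp
  rw [hcard] at hdd
  simp only [Nat.add_sub_cancel, hQcoeff] at hdd
  -- split the sum over `Option (Fin n)`
  rw [univ_option, Finset.sum_insertNone] at hdd
  -- erase identities
  have herase_none : (Finset.insertNone (Finset.univ : Finset (Fin n))).erase none
      = Finset.univ.map Function.Embedding.some := by
    ext o; cases o <;> simp
  have herase_some : ∀ i : Fin n,
      (Finset.insertNone (Finset.univ : Finset (Fin n))).erase (some i)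
      = Finset.insertNone (Finset.univ.erase i) := by
    intro i; ext o; cases o <;> simp [eq_comm]
  set D : Fin n → ℂ := fun i => ∏ j ∈ univ.erase i, (u i - u j) with hD
  have hD0 : ∀ i, D i ≠ 0 := by
    intro i
    refine Finset.prod_ne_zero_iff.mpr fun j hj => ?_
    exact hsub i j (Ne.symm (Finset.mem_erase.mp hj).1)
  have hprodu : (∏ i : Fin n, u i) ≠ 0 := Finset.prod_ne_zero_iff.mpr fun i _ => hu0 i
  have hnone : Q.eval (v none) / ∏ j ∈ (Finset.insertNone (Finset.univ : Finset (Fin n))).erase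
      none, (v none - v j) = b ^ n := by
    rw [herase_none, Finset.prod_map]
    have hden : (∏ i : Fin n, (v none - v (Function.Embedding.some i)))
        = (-1) ^ n * ∏ i : Fin n, u i := by
      have : ∀ i : Fin n, v none - v (Function.Embedding.some i) = (-1) * u i := by
        intro i; simp [hv]
      rw [Finset.prod_congr rfl fun i _ => this i, Finset.prod_mul_distrib]
      simp
    have hnum : Q.eval (v none) = (-1) ^ n * (b ^ n * ∏ i : Fin n, u i) := by
      rw [show v none = 0 by simp [hv], hQeval]
      have : ∀ j : Fin n, a * 0 - b * u j = (-1) * (b * u j) := by intro j; ring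
      rw [Finset.prod_congr rfl fun j _ => this j, Finset.prod_mul_distrib,
        Finset.prod_mul_distrib]
      simp
    rw [hden, hnum, mul_div_mul_left _ _ (pow_ne_zero n (by norm_num : (-1 : ℂ) ≠ 0)),
      mul_div_assoc, div_self hprodu, mul_one]
  have hsome : ∀ i : Fin n, Q.eval (v (some i)) / ∏ j ∈ (Finset.insertNone
      (Finset.univ : Finset (Fin n))).erase (some i), (v (some i) - v j)
      = Q.eval (u i) / (u i * D i) := by
    intro i
    rw [herase_some i, Finset.prod_insertNone]
    simp [hv, hD]
  rw [hnone] at hdd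
  rw [Finset.sum_congr rfl fun i _ => hsome i] at hdd
  -- hdd : a ^ n = b ^ n + ∑ i, Q.eval (u i) / (u i * D i)
  have hsum : ∑ i : Fin n, Q.eval (u i) / (u i * D i) = a ^ n - b ^ n := by
    rw [hdd]; ring
  -- final computation
  have hneg : ((-1 : ℂ)) ^ (n - 1) ≠ 0 := pow_ne_zero _ (by norm_num)
  have hpt : ∀ i : Fin n, (∏ j ∈ univ.erase i, (a * u i - b * u j) / (u j - u i))
      = ((a - b) * (-1 : ℂ) ^ (n - 1))⁻¹ * (Q.eval (u i) / (u i * D i)) := by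
    intro i
    rw [Finset.prod_div_distrib]
    have hden : (∏ j ∈ univ.erase i, (u j - u i)) = (-1) ^ (n - 1) * D i := by
      have h : ∀ j ∈ univ.erase i, u j - u i = (-1) * (u i - u j) := fun j _ => by ring
      rw [Finset.prod_congr rfl h, Finset.prod_mul_distrib, Finset.prod_const,
        Finset.card_erase_of_mem (Finset.mem_univ i), Finset.card_univ, Fintype.card_fin, hD]
    have hnum : (a - b) * u i * (∏ j ∈ univ.erase i, (a * u i - b * u j)) = Q.eval (u i) := by
      rw [hQeval, ← Finset.mul_prod_erase univ _ (Finset.mem_univ i)]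
      ring
    have hnum' : (∏ j ∈ univ.erase i, (a * u i - b * u j))
        = Q.eval (u i) / ((a - b) * u i) := by
      rw [eq_div_iff (mul_ne_zero hab' (hu0 i))]
      linear_combination hnum
    rw [hden, hnum', div_div, inv_mul_eq_div, div_div]
    ring
  rw [Finset.sum_congr rfl fun i _ => hpt i, ← Finset.mul_sum, hsum]
  have hc : ((a - b) * (-1 : ℂ) ^ (n - 1)) ≠ 0 := mul_ne_zero hab' hneg
  have hm : ((-1 : ℂ)) ^ (n - 1) * ((-1 : ℂ)) ^ (n - 1) = 1 := by
    rw [← pow_add, ← two_mul, pow_mul]; norm_num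
  have hw : ((-1 : ℂ) ^ (n - 1))⁻¹ = (-1) ^ (n - 1) := inv_eq_of_mul_eq_one_right hm
  rw [mul_inv, hw, div_eq_mul_inv]
  ring
end

section
/- Let a, b ∈ ℂ with a ≠ b. There is a unique formal power series Q ∈ ℂ[[X]] such that Q·(exp(aX) − exp(bX)) = X·(a·exp(bX) − b·exp(aX)), where exp(aX) ∈ ℂ[[X]] denotes the power series ∑_{m≥0} aᵐXᵐ/m!. This Q has constant coefficient 1, and for every integer n ≥ 2, Q is a series solution of the Hirzebruch functional equation for n with constant c = (−1)^{n−1}·(aⁿ − bⁿ)/(a − b). -/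
open PowerSeries

/-- Substitution of a one-variable power series `Q` into a multivariate power series `g`
(intended for `g` with zero constant coefficient, e.g. `X j - X i`): the coefficient of the
substituted series at a monomial `d` only receives contributions from `Q`'s coefficients up to
the total degree of `d`, since `g ^ m` has order at least `m`. -/
noncomputable def mvSubst {n : ℕ} (Q : PowerSeries ℂ) (g : MvPowerSeries (Fin n) ℂ) :
    MvPowerSeries (Fin n) ℂ :=
  fun d => ∑ m ∈ Finset.range ((d.sum fun _ v => v) + 1),
    PowerSeries.coeff m Q * MvPowerSeries.coeff d (g ^ m)

/-- `Q` is a series solution of the Hirzebruch functional equation for `n` with constant `c`: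
`∑ i ∏_{j ≠ i} Q(z_j - z_i)/(z_j - z_i) = c` with denominators cleared. -/
def HirzebruchSeriesEq (n : ℕ) (c : ℂ) (Q : PowerSeries ℂ) : Prop :=
  ∑ i : Fin n,
      (∏ j ∈ Finset.univ.erase i,
          mvSubst Q (MvPowerSeries.X j - MvPowerSeries.X i)) *
        ∏ p ∈ Finset.univ.filter fun p : Fin n × Fin n => p.1 ≠ p.2 ∧ p.1 ≠ i,
          (MvPowerSeries.X p.2 - MvPowerSeries.X p.1)
    = MvPowerSeries.C (σ := Fin n) (R := ℂ) c *
        ∏ p ∈ Finset.univ.filter fun p : Fin n × Fin n => p.1 ≠ p.2,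
          (MvPowerSeries.X p.2 - MvPowerSeries.X p.1)

/-- `f` satisfies the Hirzebruch ODE `f f''' - 3 f' f'' = 6 q₁ (f')² + 12 q₂ f f' + 12 q₃ f²`. -/
def HirzebruchODE (q₁ q₂ q₃ : ℂ) (f : PowerSeries ℂ) : Prop :=
  f * (d⁄dX ℂ) ((d⁄dX ℂ) ((d⁄dX ℂ) f)) - 3 * (d⁄dX ℂ) f * (d⁄dX ℂ) ((d⁄dX ℂ) f)
    = PowerSeries.C (R := ℂ) (6 * q₁) * ((d⁄dX ℂ) f) ^ 2
      + PowerSeries.C (R := ℂ) (12 * q₂) * f * (d⁄dX ℂ) f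
      + PowerSeries.C (R := ℂ) (12 * q₃) * f ^ 2

/-- The formal power series `exp(aX) = ∑ aᵐ Xᵐ / m!`. -/
noncomputable def expAX (a : ℂ) : PowerSeries ℂ :=
  PowerSeries.mk fun m => a ^ m / m.factorial

/-!
With `u = z_j - z_i`, the defining relation gives
`Q(u) / u = (a e^{bu} - b e^{au}) / (e^{au} - e^{bu})` in the fraction field of `ℂ⟦z⟧`.
Since `e^{cu} = e^{c z_j} / e^{c z_i}`, putting `w_i = e^{b z_i} / e^{a z_i}` turns this into
`(a w_j - b w_i) / (w_i - w_j)`, and the Hirzebruch sum becomes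
`∑_i ∏_{j ≠ i} (a w_j - b w_i) / (w_i - w_j)`. By Lagrange interpolation this equals
`((-b)^n - (-a)^n) / (a - b)` for any distinct nonzero `w_i`.
-/

namespace MvPowerSeries

variable {σ R : Type*} [CommRing R]

def orderGEIdeal (N : ℕ) : Ideal (MvPowerSeries σ R) where
  carrier := {f | (N : ℕ∞) ≤ f.order}
  add_mem' hf hg := (le_min hf hg).trans min_order_le_add
  zero_mem' := by simp
  smul_mem' _ _ hf := hf.trans (le_add_self.trans le_order_mul)

theorem pow_mem_orderGEIdeal {x : MvPowerSeries σ R} (hx : constantCoeff x = 0) (N : ℕ) :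
    x ^ N ∈ orderGEIdeal N :=
  le_order_pow_of_constantCoeff_eq_zero N hx

theorem eq_of_forall_sub_mem_orderGEIdeal {f g : MvPowerSeries σ R}
    (h : ∀ N, f - g ∈ orderGEIdeal (σ := σ) (R := R) N) : f = g := by
  ext d
  rw [← sub_eq_zero, ← map_sub]
  exact coeff_of_lt_order ((WithTop.coe_lt_coe.mpr d.degree.lt_succ_self).trans_le (h _))

end MvPowerSeries

namespace PowerSeries

variable {σ R : Type*} [CommRing R]

theorem constantCoeff_subst_of_constantCoeff_eq_zero {x : MvPowerSeries σ R}
    (hx : MvPowerSeries.constantCoeff x = 0) (f : R⟦X⟧) :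
    MvPowerSeries.constantCoeff (f.subst x) = constantCoeff f := by
  have ha : HasSubst x := .of_constantCoeff_zero hx
  conv_lhs => rw [eq_X_mul_shift_add_const f]
  simp [subst_add ha, subst_mul ha, subst_X ha, subst_C, hx]

theorem rescale_subst {x : MvPowerSeries σ R} (hx : HasSubst x) (c : R) (f : R⟦X⟧) :
    (rescale c f).subst x = f.subst (c • x) := by
  rw [rescale_eq_subst, subst_comp_subst_apply (.smul_X' c) hx, subst_smul hx, subst_X hx]

theorem quotientMk_subst_eq_sum_of_pow_mem {I : Ideal (MvPowerSeries σ R)} {x : MvPowerSeries σ R}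
    (hx : HasSubst x) {N : ℕ} (hxN : x ^ N ∈ I) (f : R⟦X⟧) :
    Ideal.Quotient.mk I (f.subst x) =
      ∑ i ∈ Finset.range N, coeff i f • Ideal.Quotient.mk I x ^ i := by
  conv_lhs => rw [eq_X_pow_mul_shift_add_trunc N f]
  rw [subst_add hx, subst_mul hx, subst_pow hx, subst_X hx, subst_coe hx, map_add, map_mul,
    Ideal.Quotient.eq_zero_iff_mem.mpr hxN, zero_mul, zero_add, ← Ideal.Quotient.mkₐ_eq_mk R,
    ← Polynomial.aeval_algHom_apply, Polynomial.aeval_def, eval₂_trunc_eq_sum_range]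
  exact Finset.sum_congr rfl fun i _ => (Algebra.smul_def _ _).symm

variable [Algebra ℚ R]

theorem quotientMk_subst_exp_of_pow_mem {I : Ideal (MvPowerSeries σ R)} {x : MvPowerSeries σ R}
    (hx : HasSubst x) {N : ℕ} (hxN : x ^ N ∈ I) :
    Ideal.Quotient.mk I ((exp R).subst x) = IsNilpotent.exp (Ideal.Quotient.mk I x) := by
  rw [quotientMk_subst_eq_sum_of_pow_mem hx hxN, IsNilpotent.exp_eq_sum (k := N)]
  · simp [coeff_exp, algebraMap_smul]
  · rw [← map_pow, Ideal.Quotient.eq_zero_iff_mem.mpr hxN]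

open MvPowerSeries in
/-- Modulo the power series of order at least `N`, substituting into `exp` is the exponential
of a nilpotent element, for which `IsNilpotent.exp_add_of_commute` applies. -/
theorem exp_subst_add {x y : MvPowerSeries σ R} (hx : MvPowerSeries.constantCoeff x = 0)
    (hy : MvPowerSeries.constantCoeff y = 0) :
    (exp R).subst (x + y) = (exp R).subst x * (exp R).subst y := by
  refine eq_of_forall_sub_mem_orderGEIdeal fun N => Ideal.Quotient.eq.mp ?_
  have hxy : MvPowerSeries.constantCoeff (x + y) = 0 := by rw [map_add, hx, hy, add_zero]
  have mk_pow {z : MvPowerSeries σ R} (hz : MvPowerSeries.constantCoeff z = 0) :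
      Ideal.Quotient.mk (orderGEIdeal N) z ^ N = 0 := by
    rw [← map_pow, Ideal.Quotient.eq_zero_iff_mem]
    exact pow_mem_orderGEIdeal hz N
  rw [map_mul,
    quotientMk_subst_exp_of_pow_mem (.of_constantCoeff_zero hxy) (pow_mem_orderGEIdeal hxy N),
    quotientMk_subst_exp_of_pow_mem (.of_constantCoeff_zero hx) (pow_mem_orderGEIdeal hx N),
    quotientMk_subst_exp_of_pow_mem (.of_constantCoeff_zero hy) (pow_mem_orderGEIdeal hy N),
    map_add,
    IsNilpotent.exp_add_of_commute (.all _ _) ⟨N, mk_pow hx⟩ ⟨N, mk_pow hy⟩]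

end PowerSeries

theorem mvSubst_eq_subst {n : ℕ} {g : MvPowerSeries (Fin n) ℂ}
    (hg : MvPowerSeries.constantCoeff g = 0) (Q : ℂ⟦X⟧) : mvSubst Q g = Q.subst g := by
  ext d
  rw [coeff_subst (.of_constantCoeff_zero hg),
    finsum_eq_sum_of_support_subset (s := Finset.range ((d.sum fun _ v => v) + 1)) _ ?_]
  · rfl
  intro m hm
  simp only [Function.mem_support, Finset.coe_range, Set.mem_Iio] at hm ⊢
  by_contra! h
  refine hm ?_
  rw [MvPowerSeries.coeff_of_lt_order, smul_zero]
  exact (WithTop.coe_lt_coe.mpr h).trans_le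
    (MvPowerSeries.le_order_pow_of_constantCoeff_eq_zero m hg)

theorem constantCoeff_expAX (c : ℂ) : constantCoeff (expAX c) = 1 := by
  simp [expAX, ← coeff_zero_eq_constantCoeff_apply]

theorem expAX_eq_rescale (c : ℂ) : expAX c = rescale c (exp ℂ) := by
  ext m
  simp [expAX, coeff_exp, div_eq_mul_inv, mul_comm]

theorem expAX_subst_add {σ : Type*} (c : ℂ) {x y : MvPowerSeries σ ℂ}
    (hx : MvPowerSeries.constantCoeff x = 0) (hy : MvPowerSeries.constantCoeff y = 0) :
    (expAX c).subst (x + y) = (expAX c).subst x * (expAX c).subst y := by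
  have hs {z : MvPowerSeries σ ℂ} (hz : MvPowerSeries.constantCoeff z = 0) :
      MvPowerSeries.constantCoeff (c • z) = 0 := by simp [hz]
  simp only [expAX_eq_rescale]
  rw [rescale_subst (.of_constantCoeff_zero (by simp [hx, hy])),
    rescale_subst (.of_constantCoeff_zero hx), rescale_subst (.of_constantCoeff_zero hy), smul_add,
    exp_subst_add (hs hx) (hs hy)]

theorem constantCoeff_eq_sub_of_expAX_sub_eq_X_mul {a b : ℂ} {V : ℂ⟦X⟧}
    (hV : expAX a - expAX b = X * V) : constantCoeff V = a - b := by
  simpa [expAX, coeff_succ_X_mul] using (congrArg (coeff 1) hV).symm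

/-- With `A = exp(a z)` and `B = exp(b z)` at two points `z₁, z₂`, the value of `Q(u) / u` at
`u = z₂ - z₁` in terms of `w = B / A`. -/
theorem map_div_map_X_eq_of_mul_eq {K : Type*} [Field K] [Algebra ℂ K]
    (ψ : ℂ⟦X⟧ →ₐ[ℂ] K) {a b : ℂ} {Q V : ℂ⟦X⟧} (hV : expAX a - expAX b = X * V)
    (hQ : Q * V = C a * expAX b - C b * expAX a) (hψV : ψ V ≠ 0) {A₁ A₂ B₁ B₂ : K}
    (hA₁ : A₁ ≠ 0) (hA₂ : A₂ ≠ 0) (hB₁ : B₁ ≠ 0) (hA : ψ (expAX a) * A₁ = A₂)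
    (hB : ψ (expAX b) * B₁ = B₂) :
    ψ Q / ψ X = (algebraMap ℂ K a * (B₂ / A₂) - algebraMap ℂ K b * (B₁ / A₁)) /
      (B₁ / A₁ - B₂ / A₂) := by
  have hQX : ψ Q / ψ X = (algebraMap ℂ K a * ψ (expAX b) - algebraMap ℂ K b * ψ (expAX a)) /
      (ψ (expAX a) - ψ (expAX b)) := by
    rw [← map_sub, hV, ← ψ.commutes a, ← ψ.commutes b, algebraMap_eq, ← map_mul,
      ← map_mul, ← map_sub, ← hQ, map_mul, map_mul, mul_div_mul_right _ _ hψV]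
  rw [hQX, (eq_div_of_mul_eq hA₁ hA), (eq_div_of_mul_eq hB₁ hB),
    ← mul_div_mul_right _ _ (div_ne_zero hB₁ hA₂)]
  congr 1 <;> field_simp

section Lagrange

open Polynomial Finset

variable {R ι : Type*} [CommRing R]

theorem Polynomial.natDegree_prod_linear_le (s : Finset ι) (c : R) (u : ι → R) :
    (∏ j ∈ s, (C c * X + C (u j) : R[X])).natDegree ≤ #s := by
  refine (natDegree_prod_le _ _).trans ?_
  exact (sum_le_card_nsmul s _ 1 fun j _ => natDegree_linear_le).trans_eq
    ((smul_eq_mul _ _).trans (mul_one _))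

theorem Polynomial.coeff_prod_linear (s : Finset ι) (c : R) (u : ι → R) :
    (∏ j ∈ s, (C c * X + C (u j) : R[X])).coeff #s = c ^ #s := by
  simpa using coeff_prod_of_natDegree_le s (fun j => (C c * X + C (u j) : R[X])) 1
    fun j _ => natDegree_linear_le

/-- Lagrange interpolation of `x ↦ ∏ j, (a * w j - b * x)` at the nodes `0, w 1, …, w n`. -/
theorem sub_mul_sum_prod_div_sub {K : Type*} [Field K] [Fintype ι] [DecidableEq ι] (a b : K)
    {w : ι → K} (hw : Function.Injective w) (hw0 : ∀ i, w i ≠ 0) :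
    (a - b) * ∑ i, ∏ j ∈ univ.erase i, (a * w j - b * w i) / (w i - w j)
      = (-b) ^ Fintype.card ι - (-a) ^ Fintype.card ι := by
  classical
  set P : K[X] := ∏ j, (Polynomial.C (-b) * Polynomial.X + Polynomial.C (a * w j)) with hP
  have hPeval (x : K) : P.eval x = ∏ j, (a * w j - b * x) := by
    simp only [hP, eval_prod, eval_add, eval_mul, eval_C, eval_X]
    exact prod_congr rfl fun j _ => by ring
  have h0 : (0 : K) ∉ univ.image w := by simpa [eq_comm] using hw0
  have hcard : #(insert 0 (univ.image w)) = #(univ : Finset ι) + 1 := by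
    rw [card_insert_of_notMem h0, card_image_of_injective _ hw]
  have key := Lagrange.coeff_eq_sum (v := id) (Set.injOn_id _) (s := insert 0 (univ.image w))
    (P := P) (by
      rw [hcard]
      exact degree_le_natDegree.trans_lt
        (WithBot.coe_lt_coe.mpr (Nat.lt_succ_of_le (natDegree_prod_linear_le _ _ _))))
  rw [hcard, Nat.add_sub_cancel, coeff_prod_linear, sum_insert h0, sum_image hw.injOn,
    erase_insert h0, prod_image hw.injOn] at key
  have term0 : P.eval 0 / ∏ j, (0 - w j) = (-a) ^ #(univ : Finset ι) := by
    rw [hPeval, ← prod_div_distrib, ← prod_const]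
    exact prod_congr rfl fun j _ => by field_simp [hw0 j]; ring
  have termi (i : ι) : P.eval (w i) / ∏ x ∈ (insert 0 (univ.image w)).erase (w i), (w i - x)
      = (a - b) * ∏ j ∈ univ.erase i, (a * w j - b * w i) / (w i - w j) := by
    have h0i : (0 : K) ∉ (univ.erase i).image w := by simpa [eq_comm] using fun j _ => hw0 j
    rw [erase_insert_of_ne (hw0 i).symm, ← image_erase hw, prod_insert h0i, prod_image hw.injOn,
      hPeval, ← mul_prod_erase univ _ (mem_univ i), mul_div_mul_comm, prod_div_distrib, sub_zero,
      ← sub_mul, mul_div_cancel_right₀ _ (hw0 i)]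
  simp only [id] at key
  rw [term0, sum_congr rfl fun i _ => termi i, ← mul_sum] at key
  rw [← card_univ]
  linear_combination -key

end Lagrange

section OffDiagonal

open Finset

variable {ι : Type*} [Fintype ι] [DecidableEq ι]

theorem prod_offDiag_eq_prod_erase_mul {M : Type*} [CommMonoid M] (i : ι) (f : ι × ι → M) :
    ∏ p ∈ univ.filter (fun p : ι × ι => p.1 ≠ p.2), f p
      = (∏ j ∈ univ.erase i, f (i, j)) *
        ∏ p ∈ univ.filter (fun p : ι × ι => p.1 ≠ p.2 ∧ p.1 ≠ i), f p := by
  rw [← prod_filter_mul_prod_filter_not _ (fun p : ι × ι => p.1 = i), filter_filter,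
    filter_filter]
  congr 1
  refine prod_nbij' Prod.snd (fun j => (i, j)) ?_ ?_ ?_ ?_ ?_ <;> aesop

theorem sum_prod_mul_prod_offDiag {K : Type*} [Field K] {z : ι → K} (hz : Function.Injective z)
    (q : ι → ι → K) :
    ∑ i, (∏ j ∈ univ.erase i, q i j) *
        ∏ p ∈ univ.filter (fun p : ι × ι => p.1 ≠ p.2 ∧ p.1 ≠ i), (z p.2 - z p.1)
      = (∑ i, ∏ j ∈ univ.erase i, q i j / (z j - z i)) *
        ∏ p ∈ univ.filter (fun p : ι × ι => p.1 ≠ p.2), (z p.2 - z p.1) := by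
  rw [sum_mul]
  refine sum_congr rfl fun i _ => ?_
  have hD : ∏ j ∈ univ.erase i, (z j - z i) ≠ 0 :=
    prod_ne_zero_iff.mpr fun j hj => sub_ne_zero.mpr (hz.ne (ne_of_mem_erase hj))
  rw [prod_offDiag_eq_prod_erase_mul i, prod_div_distrib, ← mul_assoc, div_mul_cancel₀ _ hD]

end OffDiagonal

open Finset in
/-- The Hirzebruch sum for the Todd series `Q`, evaluated through algebra maps `ψ i j` that
send `X` to `z j - z i` and `exp(c X)` to the quotient at `j` and `i` of `A = exp(a z)`,
`B = exp(b z)`. -/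
theorem sum_prod_map_mul_prod_offDiag_eq {K ι : Type*} [Field K] [Algebra ℂ K] [Fintype ι]
    [DecidableEq ι] {a b : ℂ} (hab : a ≠ b) {Q V : ℂ⟦X⟧} (hV : expAX a - expAX b = X * V)
    (hQ : Q * V = C a * expAX b - C b * expAX a) (ψ : ι → ι → ℂ⟦X⟧ →ₐ[ℂ] K)
    {z A B : ι → K} (hz : Function.Injective z) (hA : ∀ i, A i ≠ 0) (hB : ∀ i, B i ≠ 0)
    (hψX : ∀ i j, ψ i j X = z j - z i) (hψA : ∀ i j, ψ i j (expAX a) * A i = A j)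
    (hψB : ∀ i j, ψ i j (expAX b) * B i = B j) (hψV : ∀ i j, ψ i j V ≠ 0) :
    ∑ i, (∏ j ∈ univ.erase i, ψ i j Q) *
        ∏ p ∈ univ.filter (fun p : ι × ι => p.1 ≠ p.2 ∧ p.1 ≠ i), (z p.2 - z p.1)
      = algebraMap ℂ K (((-b) ^ Fintype.card ι - (-a) ^ Fintype.card ι) / (a - b)) *
        ∏ p ∈ univ.filter (fun p : ι × ι => p.1 ≠ p.2), (z p.2 - z p.1) := by
  have hw : Function.Injective fun l => B l / A l := by
    intro i j h
    by_contra hij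
    have hF := congrArg (ψ i j) hV
    rw [map_sub, map_mul, eq_div_of_mul_eq (hA i) (hψA i j), eq_div_of_mul_eq (hB i) (hψB i j),
      hψX] at hF
    refine mul_ne_zero (sub_ne_zero.mpr (hz.ne (Ne.symm hij))) (hψV i j) (hF.symm.trans ?_)
    rw [div_sub_div _ _ (hA i) (hB i), div_eq_zero_iff]
    left
    linear_combination (div_eq_div_iff (hA i) (hA j)).mp h
  have hab' : algebraMap ℂ K a - algebraMap ℂ K b ≠ 0 := by
    rw [← map_sub]
    exact (map_ne_zero _).mpr (sub_ne_zero.mpr hab)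
  rw [sum_prod_mul_prod_offDiag hz]
  congr 1
  rw [sum_congr rfl fun i _ => prod_congr rfl fun j _ => (hψX i j).symm ▸
      map_div_map_X_eq_of_mul_eq (ψ i j) hV hQ (hψV i j) (hA i) (hA j) (hB i) (hψA i j)
        (hψB i j),
    map_div₀, map_sub, map_sub, map_pow, map_pow, map_neg, map_neg, eq_div_iff hab', mul_comm,
    sub_mul_sum_prod_div_sub _ _ hw fun l => div_ne_zero (hB l) (hA l)]

theorem hirzebruchSeriesEq_of_mul_eq {a b : ℂ} (hab : a ≠ b) {Q V : ℂ⟦X⟧}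
    (hV : expAX a - expAX b = X * V) (hQ : Q * V = C a * expAX b - C b * expAX a) (n : ℕ) :
    HirzebruchSeriesEq n (((-b) ^ n - (-a) ^ n) / (a - b)) Q := by
  classical
  have : IsDomain (MvPowerSeries (Fin n) ℂ) := NoZeroDivisors.to_isDomain _
  let φ := IsScalarTower.toAlgHom ℂ (MvPowerSeries (Fin n) ℂ)
    (FractionRing (MvPowerSeries (Fin n) ℂ))
  have hφ : Function.Injective φ := IsFractionRing.injective _ _
  have hφ0 {f : MvPowerSeries (Fin n) ℂ} (hf : MvPowerSeries.constantCoeff f ≠ 0) :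
      φ f ≠ 0 :=
    (map_ne_zero_iff φ hφ).mpr fun h => hf (by rw [h, map_zero])
  have hX (i j : Fin n) : MvPowerSeries.constantCoeff
      (MvPowerSeries.X j - MvPowerSeries.X i : MvPowerSeries (Fin n) ℂ) = 0 := by
    simp
  have hψ (i j : Fin n) (f : ℂ⟦X⟧) :
      φ.comp (substAlgHom (.of_constantCoeff_zero (hX i j))) f =
        φ (f.subst (MvPowerSeries.X j - MvPowerSeries.X i)) := by
    simp [coe_substAlgHom]
  have he (c : ℂ) (l : Fin n) : φ ((expAX c).subst (MvPowerSeries.X l)) ≠ 0 := hφ0 (by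
    rw [constantCoeff_subst_of_constantCoeff_eq_zero (by simp), constantCoeff_expAX]
    exact one_ne_zero)
  have hψe (c : ℂ) (i j : Fin n) : φ ((expAX c).subst (MvPowerSeries.X j - MvPowerSeries.X i)) *
      φ ((expAX c).subst (MvPowerSeries.X i)) = φ ((expAX c).subst (MvPowerSeries.X j)) := by
    rw [← map_mul, ← expAX_subst_add c (hX i j) (by simp), sub_add_cancel]
  unfold HirzebruchSeriesEq
  apply hφ
  simp only [map_sum, map_mul, map_prod, map_sub, mvSubst_eq_subst (hX _ _), ← hψ,
    MvPowerSeries.c_eq_algebraMap, AlgHom.commutes]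
  have key := sum_prod_map_mul_prod_offDiag_eq hab hV hQ
    (fun i j => φ.comp (substAlgHom (.of_constantCoeff_zero (hX i j))))
    (fun i j h => MvPowerSeries.X_inj.mp (hφ h)) (he a) (he b) (fun i j => ?_)
    (fun i j => by simpa only [hψ] using hψe a i j)
    (fun i j => by simpa only [hψ] using hψe b i j) (fun i j => ?_)
  · rwa [Fintype.card_fin] at key
  · rw [hψ, subst_X (.of_constantCoeff_zero (hX i j)), map_sub]
  · rw [hψ]
    refine hφ0 ?_
    rw [constantCoeff_subst_of_constantCoeff_eq_zero (hX i j),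
      constantCoeff_eq_sub_of_expAX_sub_eq_X_mul hV]
    exact sub_ne_zero.mpr hab

/-- There is a unique formal power series `Q` with
`Q (exp(aX) - exp(bX)) = X (a exp(bX) - b exp(aX))` (the `Q`-series of the Todd function);
it has constant coefficient `1` and is a series solution of the Hirzebruch functional
equation for every `n ≥ 2` with constant `c = (-1)^{n-1} (aⁿ - bⁿ)/(a - b)`. -/
theorem todd_series_solves_hirzebruch (a b : ℂ) (hab : a ≠ b) :
    (∃! Q : PowerSeries ℂ,
      Q * (expAX a - expAX b)
        = PowerSeries.X * (PowerSeries.C (R := ℂ) a * expAX b - PowerSeries.C (R := ℂ) b * expAX a)) ∧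
    ∀ Q : PowerSeries ℂ,
      Q * (expAX a - expAX b)
          = PowerSeries.X * (PowerSeries.C (R := ℂ) a * expAX b - PowerSeries.C (R := ℂ) b * expAX a) →
        PowerSeries.constantCoeff (R := ℂ) Q = 1 ∧
          ∀ n : ℕ, 2 ≤ n →
            HirzebruchSeriesEq n ((-1) ^ (n - 1) * (a ^ n - b ^ n) / (a - b)) Q := by
  obtain ⟨V, hV⟩ : X ∣ expAX a - expAX b :=
    X_dvd_iff.mpr (by rw [map_sub, constantCoeff_expAX, constantCoeff_expAX, sub_self])
  have hV0 : constantCoeff V = a - b := constantCoeff_eq_sub_of_expAX_sub_eq_X_mul hV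
  have hab' : a - b ≠ 0 := sub_ne_zero.mpr hab
  have hQV (Q : ℂ⟦X⟧) : Q * (expAX a - expAX b) = X * (C a * expAX b - C b * expAX a) ↔
      Q * V = C a * expAX b - C b * expAX a := by
    rw [hV, mul_left_comm, mul_right_inj' X_ne_zero]
  simp only [hQV]
  refine ⟨⟨_, (eq_mul_inv_iff_mul_eq (hV0 ▸ hab')).mp rfl,
    fun Q hQ => (eq_mul_inv_iff_mul_eq (hV0 ▸ hab')).mpr hQ⟩,
    fun Q hQ => ⟨?_, fun n hn => ?_⟩⟩
  · have hcc := congrArg constantCoeff hQ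
    simp only [map_mul, map_sub, hV0, constantCoeff_C, constantCoeff_expAX, mul_one] at hcc
    exact mul_right_cancel₀ hab' (hcc.trans (one_mul _).symm)
  · obtain ⟨m, rfl⟩ : ∃ m, n = m + 1 := ⟨n - 1, by omega⟩
    convert hirzebruchSeriesEq_of_mul_eq hab hV hQ (m + 1) using 2
    rw [Nat.add_sub_cancel]
    ring
end

section
/- Let N, n, k be integers with N ≥ 2, N dividing n, n ≥ 2, and 1 ≤ k ≤ ⌊N/2⌋. Let η ∈ ℂ with η ≠ 0 and set α = (N − 2k)·η/N. Then for all z_1, …, z_n ∈ ℂ with sinh(η·(z_j − z_i)) ≠ 0 for all i ≠ j, one has ∑_{i=1}^n ∏_{j≠i} η·exp(−α·(z_j − z_i))/sinh(η·(z_j − z_i)) = 0. Equivalently, the function f(z) = exp(αz)·sinh(ηz)/η is a solution of the Hirzebruch functional equation for n with constant c = 0. -/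
open Complex Finset Polynomial

lemma csinh_eq (x : ℂ) : Complex.sinh x = (Complex.exp x - Complex.exp (-x)) / 2 := rfl

lemma key_sum {n : ℕ} (a : Fin n → ℂ) (ha : Function.Injective a) (m : ℕ) (hm : m + 2 ≤ n) :
    ∑ i : Fin n, a i ^ m / ∏ j ∈ univ.erase i, (a i - a j) = 0 := by
  classical
  have hvs : Set.InjOn a ↑(univ : Finset (Fin n)) := ha.injOn
  have hcard : #(univ : Finset (Fin n)) = n := by simp
  have hdeg : (X ^ m : ℂ[X]).degree < #(univ : Finset (Fin n)) := by
    rw [degree_X_pow, hcard]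
    exact_mod_cast by omega
  have hinterp : (X ^ m : ℂ[X]) = Lagrange.interpolate univ a (fun i => a i ^ m) := by
    refine Lagrange.eq_interpolate_of_eval_eq _ hvs hdeg fun i _ => by simp
  have hbasis : ∀ i : Fin n, Lagrange.basis univ a i
      = C (∏ j ∈ univ.erase i, (a i - a j)⁻¹) * Lagrange.nodal (univ.erase i) a := by
    intro i
    unfold Lagrange.basis Lagrange.basisDivisor
    rw [prod_mul_distrib, ← map_prod, Lagrange.nodal_eq]
  have hcoeff : ((X ^ m : ℂ[X])).coeff (n - 1)
      = ∑ i : Fin n, a i ^ m * ∏ j ∈ univ.erase i, (a i - a j)⁻¹ := by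
    rw [hinterp, Lagrange.interpolate_apply, finset_sum_coeff]
    refine Finset.sum_congr rfl fun i _ => ?_
    rw [hbasis i, ← mul_assoc, ← map_mul, coeff_C_mul]
    have hce : #(univ.erase i) = n - 1 := by
      rw [card_erase_of_mem (mem_univ i), hcard]
    have : (Lagrange.nodal (univ.erase i) a).coeff (n - 1) = 1 := by
      have := Lagrange.nodal_monic (s := univ.erase i) (v := a)
      rw [← hce, ← Lagrange.natDegree_nodal (s := univ.erase i) (v := a)]
      exact this.coeff_natDegree
    rw [this, mul_one]
  have h0 : ((X ^ m : ℂ[X])).coeff (n - 1) = 0 := by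
    rw [coeff_X_pow, if_neg (by omega)]
  rw [h0] at hcoeff
  simp_rw [div_eq_mul_inv, ← Finset.prod_inv_distrib]
  exact hcoeff.symm

/-- The function `f(z) = exp(αz) sinh(ηz)/η` with `α = (N - 2k) η / N`, `N ∣ n`, solves the
Hirzebruch functional equation for `n` with constant `c = 0`. -/
theorem exp_sinh_solves_hirzebruch (N n k : ℕ) (hN : 2 ≤ N) (hNn : N ∣ n) (hn : 2 ≤ n)
    (hk1 : 1 ≤ k) (hk2 : k ≤ N / 2) (η : ℂ) (hη : η ≠ 0) (α : ℂ)
    (hα : α = ((N : ℂ) - 2 * k) * η / N)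
    (z : Fin n → ℂ) (hz : ∀ i j : Fin n, i ≠ j → Complex.sinh (η * (z j - z i)) ≠ 0) :
    ∑ i : Fin n, ∏ j ∈ univ.erase i,
        η * Complex.exp (-(α * (z j - z i))) / Complex.sinh (η * (z j - z i)) = 0 := by
  classical
  have hNC : (N : ℂ) ≠ 0 := Nat.cast_ne_zero.mpr (by omega)
  have hkN : k ≤ N := le_trans hk2 (Nat.div_le_self N 2)
  have h2k : 2 * k ≤ N := by
    have h := (Nat.le_div_iff_mul_le (by norm_num)).mp hk2
    omega
  obtain ⟨q, hq⟩ := hNn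
  have hq1 : 1 ≤ q := by
    rcases Nat.eq_zero_or_pos q with h | h
    · subst h; omega
    · exact h
  have hkq : 1 ≤ k * q := Nat.mul_pos hk1 hq1
  set m : ℕ := k * q - 1 with hm
  have hm1 : m + 1 = k * q := Nat.sub_add_cancel hkq
  have hA : k * q + 1 ≤ n := by
    have h1 : k * q + 1 ≤ k * q + k * q := Nat.add_le_add_left hkq _
    have h2 : k * q + k * q ≤ n := by
      calc k * q + k * q = (2 * k) * q := by ring
        _ ≤ N * q := Nat.mul_le_mul h2k (le_refl q)
        _ = n := hq.symm
    exact h1.trans h2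
  have hmn : m + 2 ≤ n := by
    calc m + 2 = (m + 1) + 1 := rfl
      _ = k * q + 1 := by rw [hm1]
      _ ≤ n := hA
  have F1 : N * m + N = k * n := by
    calc N * m + N = N * (m + 1) := by ring
      _ = N * (k * q) := by rw [hm1]
      _ = k * (N * q) := by ring
      _ = k * n := by rw [hq]
  have hn1 : (n - 1) + 1 = n := Nat.sub_add_cancel (by omega)
  have F2 : k * (n - 1) + k = k * n := by
    calc k * (n - 1) + k = k * ((n - 1) + 1) := by ring
      _ = k * n := by rw [hn1]
  have F3 : k * (n - 1) = N * m + (N - k) := by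
    have h4 : (N - k) + k = N := Nat.sub_add_cancel hkN
    have h5 : (N * m + (N - k)) + k = k * n := by rw [add_assoc, h4, F1]
    exact Nat.add_right_cancel (F2.trans h5.symm)
  set u : Fin n → ℂ := fun i => Complex.exp (-(2 * η * z i) / N) with hu
  set a : Fin n → ℂ := fun i => u i ^ N with haa
  have ha' : ∀ i, a i = Complex.exp (-(2 * η * z i)) := by
    intro i
    simp only [haa, hu]
    rw [← Complex.exp_nat_mul]
    congr 1
    field_simp
  have hfact : ∀ i j : Fin n, a i - a j
      = Complex.exp (-(η * (z i + z j))) * (2 * Complex.sinh (η * (z j - z i))) := by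
    intro i j
    rw [ha' i, ha' j, csinh_eq,
      show -(2 * η * z i) = (-(η * (z i + z j))) + η * (z j - z i) by ring,
      show -(2 * η * z j) = (-(η * (z i + z j))) + -(η * (z j - z i)) by ring,
      Complex.exp_add, Complex.exp_add]
    ring
  have hane : ∀ i j : Fin n, i ≠ j → a i - a j ≠ 0 := fun i j hij => by
    rw [hfact i j]
    exact mul_ne_zero (Complex.exp_ne_zero _) (mul_ne_zero two_ne_zero (hz i j hij))
  have hainj : Function.Injective a := by
    intro i j h
    by_contra hij
    exact hane i j hij (sub_eq_zero_of_eq h)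
  have hterm : ∀ i j : Fin n, i ≠ j →
      η * Complex.exp (-(α * (z j - z i))) / Complex.sinh (η * (z j - z i))
      = 2 * η * (u i ^ k * u j ^ (N - k)) / (a i - a j) := by
    intro i j hij
    have hs := hz i j hij
    have hne := hane i j hij
    rw [div_eq_div_iff hs hne]
    have hE : Complex.exp (-(α * (z j - z i))) * Complex.exp (-(η * (z i + z j)))
        = u i ^ k * u j ^ (N - k) := by
      simp only [hu]
      rw [← Complex.exp_nat_mul, ← Complex.exp_nat_mul, ← Complex.exp_add, ← Complex.exp_add]
      congr 1
      rw [hα]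
      push_cast [Nat.cast_sub hkN]
      field_simp
      ring
    rw [hfact i j]
    linear_combination (2 * η * Complex.sinh (η * (z j - z i))) * hE
  have hsum : ∀ i : Fin n, (∏ j ∈ univ.erase i,
      (η * Complex.exp (-(α * (z j - z i))) / Complex.sinh (η * (z j - z i))))
      = ((2 * η) ^ (n - 1) * ∏ j : Fin n, u j ^ (N - k))
        * (a i ^ m / ∏ j ∈ univ.erase i, (a i - a j)) := by
    intro i
    rw [Finset.prod_congr rfl (fun j hj => hterm i j (Ne.symm (mem_erase.mp hj).1))]
    rw [prod_div_distrib, prod_mul_distrib, prod_const, prod_mul_distrib, prod_const]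
    have hce : #(univ.erase i) = n - 1 := by
      rw [card_erase_of_mem (mem_univ i), card_univ, Fintype.card_fin]
    rw [hce]
    have hnum : (u i ^ k) ^ (n - 1) * ∏ j ∈ univ.erase i, u j ^ (N - k)
        = (∏ j : Fin n, u j ^ (N - k)) * a i ^ m := by
      rw [← Finset.mul_prod_erase univ (fun j => u j ^ (N - k)) (mem_univ i)]
      simp only [haa]
      rw [← pow_mul, F3, pow_add, ← pow_mul]
      ring
    rw [hnum, mul_div_assoc]
    ring
  calc ∑ i : Fin n, ∏ j ∈ univ.erase i,
        η * Complex.exp (-(α * (z j - z i))) / Complex.sinh (η * (z j - z i))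
      = ∑ i : Fin n, ((2 * η) ^ (n - 1) * ∏ j : Fin n, u j ^ (N - k))
        * (a i ^ m / ∏ j ∈ univ.erase i, (a i - a j)) :=
        Finset.sum_congr rfl fun i _ => hsum i
    _ = ((2 * η) ^ (n - 1) * ∏ j : Fin n, u j ^ (N - k))
        * ∑ i : Fin n, a i ^ m / ∏ j ∈ univ.erase i, (a i - a j) := by
        rw [← Finset.mul_sum]
    _ = 0 := by rw [key_sum a hainj m hmn, mul_zero]
end

section
/- Let n ≥ 2 be an integer, q_1 ∈ ℂ, and let z_1, …, z_n ∈ ℂ be pairwise distinct. Then ∑_{i=1}^n ∏_{j≠i} (1 + q_1·(z_j − z_i))/(z_j − z_i) = n·q_1^{n−1}. Equivalently, the rational function f(z) = z/(1 + q_1 z) is a solution of the Hirzebruch functional equation for every n, with constant c = n·q_1^{n−1}. -/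
open Finset Polynomial

lemma basis_coeff_top {n : ℕ} (z : Fin n → ℂ) (hinj : Function.Injective z) (i : Fin n) :
    (Lagrange.basis univ z i).coeff (n - 1) = ∏ j ∈ univ.erase i, (z i - z j)⁻¹ := by
  have hinj' : Set.InjOn z (univ : Finset (Fin n)) := fun a _ b _ h => hinj h
  have hdeg : (Lagrange.basis univ z i).natDegree = n - 1 := by
    simpa using Lagrange.natDegree_basis hinj' (mem_univ i)
  rw [← hdeg, ← Polynomial.leadingCoeff, Lagrange.basis, Polynomial.leadingCoeff_prod]
  refine Finset.prod_congr rfl fun j hj => ?_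
  rw [Lagrange.basisDivisor, Polynomial.leadingCoeff_mul, Polynomial.leadingCoeff_C,
    (Polynomial.monic_X_sub_C (z j)).leadingCoeff, mul_one]

lemma key_interpolation {n : ℕ} (z : Fin n → ℂ) (hinj : Function.Injective z) (Q : ℂ[X])
    (hQ : Q.degree < (n : ℕ)) :
    ∑ i : Fin n, Q.eval (z i) * ∏ j ∈ univ.erase i, (z i - z j)⁻¹ = Q.coeff (n - 1) := by
  have hinj' : Set.InjOn z (univ : Finset (Fin n)) := fun a _ b _ h => hinj h
  have hcard : #(univ : Finset (Fin n)) = n := by simp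
  have h := Lagrange.eq_interpolate (v := z) (f := Q) hinj' (by rwa [hcard])
  conv_rhs => rw [h]
  rw [Lagrange.interpolate_apply, Polynomial.finset_sum_coeff]
  refine Finset.sum_congr rfl fun i _ => ?_
  rw [Polynomial.coeff_C_mul, basis_coeff_top z hinj i]

/-- The rational function `f(z) = z/(1 + q₁ z)` solves the Hirzebruch functional equation for
every `n ≥ 2`, with constant `c = n q₁^{n-1}`. -/
theorem rational_function_solves_hirzebruch (n : ℕ) (hn : 2 ≤ n) (q₁ : ℂ)
    (z : Fin n → ℂ) (hz : ∀ i j : Fin n, i ≠ j → z i ≠ z j) :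
    ∑ i : Fin n, ∏ j ∈ univ.erase i, (1 + q₁ * (z j - z i)) / (z j - z i)
      = n * q₁ ^ (n - 1) := by
  classical
  have hinj : Function.Injective z := fun a b hab => by
    by_contra h; exact hz a b h hab
  have hcard : ∀ i : Fin n, #((univ : Finset (Fin n)).erase i) = n - 1 := fun i => by
    rw [card_erase_of_mem (mem_univ i), card_univ, Fintype.card_fin]
  have hL : ∀ i : Fin n, ∏ j ∈ univ.erase i, (1 + q₁ * (z j - z i)) / (z j - z i)
      = (-1 : ℂ) ^ (n - 1) * ((∏ j ∈ univ.erase i, (1 + q₁ * (z j - z i))) *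
          ∏ j ∈ univ.erase i, (z i - z j)⁻¹) := by
    intro i
    have hB : ∏ j ∈ univ.erase i, (z j - z i)
        = (-1 : ℂ) ^ (n - 1) * ∏ j ∈ univ.erase i, (z i - z j) := by
      calc ∏ j ∈ univ.erase i, (z j - z i)
            = ∏ j ∈ univ.erase i, (-1 * (z i - z j)) :=
              Finset.prod_congr rfl fun j _ => by ring
        _ = (∏ _j ∈ univ.erase i, (-1 : ℂ)) * ∏ j ∈ univ.erase i, (z i - z j) :=
              Finset.prod_mul_distrib
        _ = (-1 : ℂ) ^ (n - 1) * ∏ j ∈ univ.erase i, (z i - z j) := by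
              rw [Finset.prod_const, hcard i]
    rw [prod_div_distrib, hB, div_eq_mul_inv, mul_inv, ← prod_inv_distrib, ← inv_pow, inv_neg,
      inv_one]
    ring
  simp_rw [hL, ← Finset.mul_sum]
  rcases eq_or_ne q₁ 0 with rfl | hq
  · have h1 : ∑ i : Fin n, (∏ j ∈ univ.erase i, (1 + (0:ℂ) * (z j - z i))) *
        ∏ j ∈ univ.erase i, (z i - z j)⁻¹ = (1 : ℂ[X]).coeff (n - 1) := by
      rw [← key_interpolation z hinj 1 (by
        rw [Polynomial.degree_one]; exact_mod_cast WithBot.coe_lt_coe.mpr (by omega))]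
      refine Finset.sum_congr rfl fun i _ => ?_
      simp
    rw [h1, Polynomial.coeff_one, if_neg (by omega)]
    rw [zero_pow (by omega)]
    ring
  · set P₁ : ℂ[X] := ∏ j : Fin n, (X - C (z j + q₁⁻¹)) with hP₁
    set P₂ : ℂ[X] := ∏ j : Fin n, (X - C (z j)) with hP₂
    have hm₁ : P₁.Monic := monic_prod_of_monic _ _ fun j _ => monic_X_sub_C _
    have hm₂ : P₂.Monic := monic_prod_of_monic _ _ fun j _ => monic_X_sub_C _
    have hnd₁ : P₁.natDegree = n := by
      rw [hP₁, natDegree_prod_of_monic _ _ fun j _ => monic_X_sub_C _]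
      simp only [natDegree_X_sub_C, Finset.sum_const, card_univ, Fintype.card_fin,
        smul_eq_mul, mul_one]
    have hnd₂ : P₂.natDegree = n := by
      rw [hP₂, natDegree_prod_of_monic _ _ fun j _ => monic_X_sub_C _]
      simp only [natDegree_X_sub_C, Finset.sum_const, card_univ, Fintype.card_fin,
        smul_eq_mul, mul_one]
    have hd₁ : P₁.degree = (n : ℕ) := by rw [degree_eq_natDegree hm₁.ne_zero, hnd₁]
    have hd₂ : P₂.degree = (n : ℕ) := by rw [degree_eq_natDegree hm₂.ne_zero, hnd₂]
    set Q : ℂ[X] := C ((-q₁) ^ n) * (P₁ - P₂) with hQdef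
    have hQdeg : Q.degree < (n : ℕ) := by
      have hlt : (P₁ - P₂).degree < (n : ℕ) := by
        rw [← hd₁]
        exact Polynomial.degree_sub_lt (hd₁.trans hd₂.symm) hm₁.ne_zero
          (hm₁.leadingCoeff.trans hm₂.leadingCoeff.symm)
      calc Q.degree ≤ (P₁ - P₂).degree := by
            rw [hQdef, degree_mul, degree_C (pow_ne_zero _ (neg_ne_zero.mpr hq)), zero_add]
        _ < (n : ℕ) := hlt
    have heval : ∀ i : Fin n, Q.eval (z i)
        = ∏ j ∈ univ.erase i, (1 + q₁ * (z j - z i)) := by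
      intro i
      have h₂ : P₂.eval (z i) = 0 := by
        rw [hP₂, eval_prod]
        exact Finset.prod_eq_zero (mem_univ i) (by simp)
      rw [hQdef, eval_mul, eval_C, eval_sub, h₂, sub_zero, hP₁, eval_prod]
      have : ((-q₁) ^ n : ℂ) = ∏ _j : Fin n, (-q₁) := by
        rw [Finset.prod_const, card_univ, Fintype.card_fin]
      rw [this, ← Finset.prod_mul_distrib]
      rw [← Finset.mul_prod_erase _ _ (mem_univ i)]
      have hterm : ∀ j : Fin n, -q₁ * ((X - C (z j + q₁⁻¹)).eval (z i))
          = 1 + q₁ * (z j - z i) := by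
        intro j
        simp only [eval_sub, eval_X, eval_C]
        field_simp
        ring
      rw [hterm i]
      simp only [sub_self, mul_zero, add_zero, one_mul]
      exact Finset.prod_congr rfl fun j _ => hterm j
    have hcoeff : Q.coeff (n - 1) = (-1 : ℂ) ^ (n - 1) * (n * q₁ ^ (n - 1)) := by
      have hu : #(univ : Finset (Fin n)) = n := by simp
      have hc₁ : P₁.coeff (n - 1) = -∑ j : Fin n, (z j + q₁⁻¹) := by
        have h := prod_X_sub_C_coeff_card_pred (univ : Finset (Fin n))
          (fun j => z j + q₁⁻¹) (by rw [hu]; omega)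
        rw [hu] at h
        exact hP₁ ▸ h
      have hc₂ : P₂.coeff (n - 1) = -∑ j : Fin n, z j := by
        have h := prod_X_sub_C_coeff_card_pred (univ : Finset (Fin n))
          (fun j => z j) (by rw [hu]; omega)
        rw [hu] at h
        exact hP₂ ▸ h
      rw [hQdef, coeff_C_mul, coeff_sub, hc₁, hc₂, Finset.sum_add_distrib,
        Finset.sum_const, hu]
      have hn1 : n - 1 + 1 = n := by omega
      have hpow : (-q₁) ^ n = (-1 : ℂ) ^ (n - 1) * (-1) * (q₁ ^ (n - 1) * q₁) := by
        rw [neg_pow, ← pow_succ, ← pow_succ, hn1]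
      rw [nsmul_eq_mul, hpow]
      field_simp
      ring
    have hsum : ∑ i : Fin n, (∏ j ∈ univ.erase i, (1 + q₁ * (z j - z i))) *
        ∏ j ∈ univ.erase i, (z i - z j)⁻¹ = Q.coeff (n - 1) := by
      rw [← key_interpolation z hinj Q hQdeg]
      exact Finset.sum_congr rfl fun i _ => by rw [heval i]
    rw [hsum, hcoeff, ← mul_assoc, ← mul_pow]
    norm_num
end

section
/- Let n ≥ 2 be an integer and c, ε, ω ∈ ℂ. Let f : ℂ → ℂ be meromorphic on all of ℂ, analytic at 0, with f(0) = 0 and f′(0) = 1. Assume: (a) for every z_1, …, z_n ∈ ℂ such that for all i ≠ j the function f is analytic at z_j − z_i and f(z_j − z_i) ≠ 0, one has ∑_{i=1}^n ∏_{j≠i} 1/f(z_j − z_i) = c; and (b) f(z + ω) = ε·f(z) for every z ∈ ℂ at which f is analytic at both z and z + ω. Then εⁿ = 1 and (ε − 1)·c = 0. -/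
/-!
Put `z_i = i t` and let `z'` be `z` with `z_0` shifted by `ω`. Periodicity multiplies the
`i = 0` term of the Hirzebruch sum by `ε^(n-1)` and divides every other term by `ε`, so comparing
the equation at `z` and at `z'` gives `(εⁿ - 1) Q(t) = (ε - 1) c` with
`Q(t) = ∏_{j ≠ 0} 1 / f(j t)`. Both configurations are admissible for all small `t ≠ 0`, because a
meromorphic function that is not locally zero is analytic and nonvanishing on a punctured
neighbourhood of every point. As `t → 0` we have `1 / Q(t) → f(0)^(n-1) = 0`, which forces
`εⁿ = 1`, and then `(ε - 1) c = 0`.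
-/

open Finset Filter Topology

theorem meromorphicOrderAt_ne_top_of_deriv_ne_zero {𝕜 E : Type*} [NontriviallyNormedField 𝕜]
    [NormedAddCommGroup E] [NormedSpace 𝕜 E] {f : 𝕜 → E} {x : 𝕜} (hf : deriv f x ≠ 0) :
    meromorphicOrderAt f x ≠ ⊤ := by
  intro htop
  have hcont : ContinuousAt f x := (differentiableAt_of_deriv_ne_zero hf).continuousAt
  have hzero : f =ᶠ[𝓝 x] 0 :=
    (hcont.eventuallyEq_nhds_iff_eventuallyEq_nhdsNE continuousAt_const).mp
      (meromorphicOrderAt_eq_top_iff.mp htop)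
  exact hf (by simp [hzero.deriv_eq])

theorem MeromorphicOn.eventually_analyticAt_and_ne_zero {E : Type*} [NormedAddCommGroup E]
    [NormedSpace ℂ E] [CompleteSpace E] {f : ℂ → E} (hf : MeromorphicOn f Set.univ) {x₀ : ℂ}
    (hx₀ : meromorphicOrderAt f x₀ ≠ ⊤) (x : ℂ) :
    ∀ᶠ w in 𝓝[≠] x, AnalyticAt ℂ f w ∧ f w ≠ 0 :=
  (hf x trivial).eventually_analyticAt.and <|
    (meromorphicOrderAt_ne_top_iff_eventually_ne_zero (hf x trivial)).mp <|
      hf.meromorphicOrderAt_ne_top_of_isPreconnected isPreconnected_univ trivial trivial hx₀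

section NormedField

variable {𝕜 : Type*} [NontriviallyNormedField 𝕜]

theorem tendsto_mul_add_nhdsNE_zero {a : 𝕜} (ha : a ≠ 0) (b : 𝕜) :
    Tendsto (fun t => a * t + b) (𝓝[≠] 0) (𝓝[≠] b) := by
  refine tendsto_nhdsWithin_iff.mpr ⟨?_, eventually_nhdsWithin_of_forall fun t ht => ?_⟩
  · exact ((continuous_const_mul a).add continuous_const).tendsto' 0 b (by simp) |>.mono_left
      nhdsWithin_le_nhds
  · simpa [ha] using ht

theorem eventually_nhdsNE_zero_forall_ne_sub {ι : Type*} [Finite ι] {P : 𝕜 → Prop}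
    (hP : ∀ b, ∀ᶠ w in 𝓝[≠] b, P w) {a : ι → 𝕜} (ha : Function.Injective a) (s : ι → 𝕜) :
    ∀ᶠ t in 𝓝[≠] (0 : 𝕜), ∀ i j, i ≠ j → P ((t • a + s) j - (t • a + s) i) := by
  refine eventually_all.mpr fun i => eventually_all.mpr fun j => ?_
  by_cases hij : i = j
  · exact Eventually.of_forall fun _ h => absurd hij h
  · have hpair := (tendsto_mul_add_nhdsNE_zero (sub_ne_zero.mpr (ha.ne (Ne.symm hij)))
      (s j - s i)).eventually (hP _)
    filter_upwards [hpair] with t ht _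
    convert ht using 1
    simp only [Pi.add_apply, Pi.smul_apply, smul_eq_mul]
    ring

theorem tendsto_prod_comp_mul_nhds_zero {ι : Type*} {f : 𝕜 → 𝕜} (hf : ContinuousAt f 0)
    (hf0 : f 0 = 0) {s : Finset ι} (hs : s.Nonempty) (a : ι → 𝕜) :
    Tendsto (fun t => ∏ j ∈ s, f (t * a j)) (𝓝 0) (𝓝 0) := by
  obtain ⟨j₀, hj₀⟩ := hs
  have hlim := tendsto_finsetProd s fun j _ =>
    hf.tendsto.comp ((continuous_mul_const (a j)).tendsto' 0 0 (zero_mul _))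
  rwa [prod_eq_zero hj₀ hf0] at hlim

theorem eq_zero_of_tendsto_of_eventually_mul_inv_eq {α : Type*} {l : Filter α} [l.NeBot]
    {P : α → 𝕜} {A B : 𝕜} (hP : Tendsto P l (𝓝 0))
    (h : ∀ᶠ t in l, P t ≠ 0 ∧ A * (P t)⁻¹ = B) : A = 0 ∧ B = 0 := by
  have hA : A = 0 := by
    refine tendsto_nhds_unique (tendsto_const_nhds.congr' ?_) (by simpa using hP.const_mul B)
    filter_upwards [h] with t ⟨hPt, ht⟩
    rw [← ht, inv_mul_cancel_right₀ hPt]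
  obtain ⟨t, -, ht⟩ := h.exists
  exact ⟨hA, by simpa [hA] using ht.symm⟩

end NormedField

section Hirzebruch

variable {K ι : Type*} [Field K] [Fintype ι] [DecidableEq ι]

def hirzebruchTerm (f : K → K) (z : ι → K) (i : ι) : K :=
  ∏ j ∈ univ.erase i, (f (z j - z i))⁻¹

variable {f : K → K} {ε ω : K} {z : ι → K} {i₀ : ι}

theorem hirzebruchTerm_add_single_self (hε : ε ≠ 0)
    (hout : ∀ j ≠ i₀, f (z j - z i₀) = ε * f (z j - z i₀ - ω)) :
    hirzebruchTerm f (z + Pi.single i₀ ω) i₀ =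
      ε ^ (Fintype.card ι - 1) * hirzebruchTerm f z i₀ := by
  have hfac : ∀ j ∈ univ.erase i₀,
      (f ((z + Pi.single i₀ ω : ι → K) j - (z + Pi.single i₀ ω : ι → K) i₀))⁻¹ =
        ε * (f (z j - z i₀))⁻¹ := fun j hj => by
    have hj : j ≠ i₀ := ne_of_mem_erase hj
    rw [hout j hj, mul_inv, ← mul_assoc, mul_inv_cancel₀ hε, one_mul]
    simp [hj, sub_sub]
  rw [hirzebruchTerm, prod_congr rfl hfac, prod_mul_distrib, prod_const,
    card_erase_of_mem (mem_univ _), card_univ, hirzebruchTerm]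

theorem mul_hirzebruchTerm_add_single_of_ne (hε : ε ≠ 0) {i : ι} (hi : i ≠ i₀)
    (hin : f (z i₀ - z i + ω) = ε * f (z i₀ - z i)) :
    ε * hirzebruchTerm f (z + Pi.single i₀ ω) i = hirzebruchTerm f z i := by
  have hi₀ : i₀ ∈ univ.erase i := mem_erase.mpr ⟨hi.symm, mem_univ _⟩
  have hrest : ∀ j ∈ (univ.erase i).erase i₀,
      (z + Pi.single i₀ ω : ι → K) j - (z + Pi.single i₀ ω : ι → K) i = z j - z i :=
    fun j hj => by simp [ne_of_mem_erase hj, hi]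
  have hshift :
      (z + Pi.single i₀ ω : ι → K) i₀ - (z + Pi.single i₀ ω : ι → K) i = z i₀ - z i + ω := by
    simp [hi, sub_add_eq_add_sub]
  rw [hirzebruchTerm, hirzebruchTerm, ← mul_prod_erase _ _ hi₀, ← mul_prod_erase _ _ hi₀,
    prod_congr rfl fun j hj => congrArg (fun w => (f w)⁻¹) (hrest j hj), ← mul_assoc, hshift,
    hin, mul_inv, ← mul_assoc, mul_inv_cancel₀ hε, one_mul]

theorem sub_one_mul_hirzebruchTerm_eq {S : Set K} {c : K} (hε : ε ≠ 0)
    (hper : ∀ w ∈ S, w + ω ∈ S → f (w + ω) = ε * f w)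
    (hz : ∀ i j, i ≠ j → z j - z i ∈ S)
    (hz' : ∀ i j, i ≠ j → (z + Pi.single i₀ ω : ι → K) j - (z + Pi.single i₀ ω : ι → K) i ∈ S)
    (hsum : ∑ i, hirzebruchTerm f z i = c)
    (hsum' : ∑ i, hirzebruchTerm f (z + Pi.single i₀ ω) i = c) :
    (ε ^ Fintype.card ι - 1) * hirzebruchTerm f z i₀ = (ε - 1) * c := by
  have hout : ∀ j ≠ i₀, f (z j - z i₀) = ε * f (z j - z i₀ - ω) := fun j hj => by
    have hmem : z j - z i₀ - ω ∈ S := by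
      simpa [Pi.single_apply, hj, sub_sub] using hz' i₀ j hj.symm
    simpa using (hper _ hmem (by simpa using hz i₀ j hj.symm))
  have hin : ∀ i ≠ i₀, f (z i₀ - z i + ω) = ε * f (z i₀ - z i) := fun i hi => by
    have hmem : z i₀ - z i + ω ∈ S := by
      simpa [Pi.single_apply, hi, sub_add_eq_add_sub] using hz' i i₀ hi
    exact hper _ (hz i i₀ hi) hmem
  have hcard : ε * ε ^ (Fintype.card ι - 1) = ε ^ Fintype.card ι := by
    rw [← pow_succ', Nat.sub_add_cancel (Fintype.card_pos_iff.mpr ⟨i₀⟩)]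
  have hrest : ε * ∑ i ∈ univ.erase i₀, hirzebruchTerm f (z + Pi.single i₀ ω) i =
      ∑ i ∈ univ.erase i₀, hirzebruchTerm f z i := by
    rw [mul_sum]
    exact sum_congr rfl fun i hi =>
      mul_hirzebruchTerm_add_single_of_ne hε (ne_of_mem_erase hi) (hin i (ne_of_mem_erase hi))
  rw [← add_sum_erase _ _ (mem_univ i₀)] at hsum hsum'
  rw [hirzebruchTerm_add_single_self hε hout] at hsum'
  linear_combination ε * hsum' - hsum - hcard * hirzebruchTerm f z i₀ - hrest

end Hirzebruch

theorem hirzebruch_periodicity_general (n : ℕ) (hn : 2 ≤ n) (c ε ω : ℂ) (f : ℂ → ℂ)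
    (hmer : MeromorphicOn f Set.univ)
    (hf00 : f 0 = 0) (hf0' : deriv f 0 = 1)
    (hsol : ∀ z : Fin n → ℂ,
      (∀ i j : Fin n, i ≠ j → AnalyticAt ℂ f (z j - z i) ∧ f (z j - z i) ≠ 0) →
      ∑ i : Fin n, ∏ j ∈ univ.erase i, (f (z j - z i))⁻¹ = c)
    (hper : ∀ z : ℂ, AnalyticAt ℂ f z → AnalyticAt ℂ f (z + ω) → f (z + ω) = ε * f z) :
    ε ^ n = 1 ∧ (ε - 1) * c = 0 := by
  have : NeZero n := ⟨by omega⟩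
  have hderiv : deriv f 0 ≠ 0 := by simp [hf0']
  have hgood : ∀ b : ℂ, ∀ᶠ w in 𝓝[≠] b, AnalyticAt ℂ f w ∧ f w ≠ 0 :=
    hmer.eventually_analyticAt_and_ne_zero (meromorphicOrderAt_ne_top_of_deriv_ne_zero hderiv)
  have hε : ε ≠ 0 := by
    obtain ⟨w, hw, hwω⟩ := ((hgood 0).and
      ((tendsto_mul_add_nhdsNE_zero one_ne_zero ω).eventually (hgood ω))).exists
    rw [one_mul] at hwω
    exact left_ne_zero_of_mul (hper w hw.1 hwω.1 ▸ hwω.2)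
  set a : Fin n → ℂ := fun i => ((i : ℕ) : ℂ)
  have ha : Function.Injective a := Nat.cast_injective.comp Fin.val_injective
  set P : ℂ → ℂ := fun t => ∏ j ∈ univ.erase 0, f (t * a j)
  have hkey : ∀ᶠ t in 𝓝[≠] (0 : ℂ), P t ≠ 0 ∧ (ε ^ n - 1) * (P t)⁻¹ = (ε - 1) * c := by
    filter_upwards [eventually_nhdsNE_zero_forall_ne_sub hgood ha 0,
      eventually_nhdsNE_zero_forall_ne_sub hgood ha (Pi.single 0 ω)] with t hz hz'
    simp only [add_zero] at hz
    have hterm : hirzebruchTerm f (t • a) 0 = (P t)⁻¹ := by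
      simp [hirzebruchTerm, P, a, prod_inv_distrib]
    refine ⟨prod_ne_zero_iff.mpr fun j hj => ?_, ?_⟩
    · simpa [a] using (hz 0 j (ne_of_mem_erase hj).symm).2
    · rw [← hterm]
      simpa using sub_one_mul_hirzebruchTerm_eq (S := {w | AnalyticAt ℂ f w}) hε hper
        (fun i j h => (hz i j h).1) (fun i j h => (hz' i j h).1) (hsol _ hz) (hsol _ hz')
  have hP : Tendsto P (𝓝[≠] 0) (𝓝 0) :=
    (tendsto_prod_comp_mul_nhds_zero (differentiableAt_of_deriv_ne_zero hderiv).continuousAt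
      hf00 ⟨⟨1, by omega⟩, by simp [Fin.ext_iff]⟩ a).mono_left nhdsWithin_le_nhds
  simpa [sub_eq_zero] using eq_zero_of_tendsto_of_eventually_mul_inv_eq hP hkey

/-- If a meromorphic solution `f` of the Hirzebruch functional equation for `n` with constant
`c` (normalized by `f(0) = 0`, `f'(0) = 1`) has a periodicity property `f(z + ω) = ε f(z)`,
then `εⁿ = 1` and `(ε - 1) c = 0`. -/
theorem hirzebruch_periodicity (n : ℕ) (hn : 2 ≤ n) (c ε ω : ℂ) (f : ℂ → ℂ)
    (hmer : MeromorphicOn f Set.univ)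
    (hf0 : AnalyticAt ℂ f 0) (hf00 : f 0 = 0) (hf0' : deriv f 0 = 1)
    (hsol : ∀ z : Fin n → ℂ,
      (∀ i j : Fin n, i ≠ j → AnalyticAt ℂ f (z j - z i) ∧ f (z j - z i) ≠ 0) →
      ∑ i : Fin n, ∏ j ∈ univ.erase i, (f (z j - z i))⁻¹ = c)
    (hper : ∀ z : ℂ, AnalyticAt ℂ f z → AnalyticAt ℂ f (z + ω) → f (z + ω) = ε * f z) :
    ε ^ n = 1 ∧ (ε - 1) * c = 0 :=
  hirzebruch_periodicity_general n hn c ε ω f hmer hf00 hf0' hsol hper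
end

section
/- Let α, κ, η ∈ ℂ with η ≠ 0, and define the singular Krichever function φ(z) = exp((α − κ)·z)·sinh(η·z)/(η·cosh(η·z) − κ·sinh(η·z)) on the open set U = {z ∈ ℂ : η·cosh(η·z) − κ·sinh(η·z) ≠ 0}. Then φ is holomorphic on U and at every point of U it satisfies φ·φ''' − 3·φ'·φ'' = 6q_1·(φ')² + 12q_2·φ·φ' + 12q_3·φ², where q_1 = −α, 6q_2 = 3α² − 3κ² + 2η², and 6q_3 = −(α − κ)·(α² + κα − 2κ² + 2η²), and φ', φ'', φ''' denote the first three complex derivatives of φ. -/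
/-!
Write `φ(z) = exp((α - κ) z) g(z)` with `g(z) = sinh(ηz) / (η cosh(ηz) - κ sinh(ηz))`.
The quotient rule shows that `g` solves the Riccati equation `g' = 1 + 2κ g + (κ² - η²) g²`.
Along a solution of `g' = a + b g + c g²` every derivative of `g` is a polynomial in `g`, and the
Hirzebruch equation becomes a polynomial identity, valid for `(q₁, q₂, q₃) = (-b/2, (b² - 4ac)/12, 0)`.
By the Leibniz rule, multiplying a solution by `exp(λz)` preserves the Hirzebruch equation with
parameters shifted polynomially in `λ`; for `λ = α - κ` this gives the stated `q₁, q₂, q₃`.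
-/

open Complex Polynomial Filter Topology

def SolvesHirzebruchAt (q₁ q₂ q₃ : ℂ) (f : ℂ → ℂ) (z : ℂ) : Prop :=
  f z * deriv (deriv (deriv f)) z - 3 * deriv f z * deriv (deriv f) z =
    6 * q₁ * deriv f z ^ 2 + 12 * q₂ * f z * deriv f z + 12 * q₃ * f z ^ 2

/-- The polynomial in `g` giving the `n`-th derivative of a solution of `g' = P(g)`. -/
noncomputable def iterDerivPoly (P : ℂ[X]) : ℕ → ℂ[X]
  | 0 => X
  | n + 1 => derivative (iterDerivPoly P n) * P

theorem iterate_deriv_eventuallyEq_eval_iterDerivPoly {P : ℂ[X]} {g : ℂ → ℂ} {z : ℂ}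
    (hg : ∀ᶠ w in 𝓝 z, HasDerivAt g (P.eval (g w)) w) (n : ℕ) :
    deriv^[n] g =ᶠ[𝓝 z] fun w => (iterDerivPoly P n).eval (g w) := by
  induction n with
  | zero => simp [iterDerivPoly]
  | succ n ih =>
    rw [Function.iterate_succ']
    refine ih.deriv.trans ?_
    filter_upwards [hg] with w hw
    simpa [iterDerivPoly, Function.comp_def] using
      (((iterDerivPoly P n).hasDerivAt (g w)).comp w hw).deriv

theorem solvesHirzebruchAt_of_riccati {g : ℂ → ℂ} {z : ℂ} (a b c : ℂ)
    (hg : ∀ᶠ w in 𝓝 z, HasDerivAt g (a + b * g w + c * g w ^ 2) w) :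
    SolvesHirzebruchAt (-b / 2) ((b ^ 2 - 4 * a * c) / 12) 0 g z := by
  have hP : ∀ᶠ w in 𝓝 z, HasDerivAt g ((C a + C b * X + C c * X ^ 2).eval (g w)) w := by
    simpa using hg
  have h n := (iterate_deriv_eventuallyEq_eval_iterDerivPoly hP n).eq_of_nhds
  have h1 := h 1
  have h2 := h 2
  have h3 := h 3
  simp only [iterDerivPoly, Function.iterate_succ, Function.iterate_zero, Function.comp_apply, id_eq,
    derivative_mul, derivative_X, derivative_C, derivative_X_pow_succ, derivative_one, eval_add, eval_mul,
    eval_C, eval_X, eval_pow, eval_one, map_add, map_one, Nat.cast_one, pow_one, zero_mul, one_mul,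
    mul_one, zero_add, add_zero] at h1 h2 h3
  unfold SolvesHirzebruchAt
  rw [h1, h2, h3]
  ring

theorem iteratedDeriv_cexp_const_mul_mul {g : ℂ → ℂ} {z : ℂ} {n : ℕ} (hg : ContDiffAt ℂ n g z)
    (l : ℂ) :
    iteratedDeriv n (fun w => exp (l * w) * g w) z =
      ∑ i ∈ Finset.range (n + 1), n.choose i * (l ^ i * exp (l * z)) * iteratedDeriv (n - i) g z := by
  rw [iteratedDeriv_fun_mul (by fun_prop) hg]
  simp [iteratedDeriv_cexp_const_mul]

theorem SolvesHirzebruchAt.exp_mul {p₁ p₂ p₃ : ℂ} {g : ℂ → ℂ} {z : ℂ}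
    (h : SolvesHirzebruchAt p₁ p₂ p₃ g z) (hg : ContDiffAt ℂ 3 g z) (l : ℂ) :
    SolvesHirzebruchAt (p₁ - l) (p₂ - p₁ * l + l ^ 2 / 2)
      (p₃ - p₂ * l + p₁ * l ^ 2 / 2 - l ^ 3 / 6) (fun w => exp (l * w) * g w) z := by
  have k n (hn : n ≤ 3) := iteratedDeriv_cexp_const_mul_mul (hg.of_le (by exact_mod_cast hn)) l
  have k1 := k 1 (by norm_num)
  have k2 := k 2 (by norm_num)
  have k3 := k 3 (by norm_num)
  simp only [iteratedDeriv_succ, iteratedDeriv_zero, Finset.sum_range_succ, Finset.range_one,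
    Finset.sum_singleton, Nat.choose_succ_self_right, Nat.choose_self, Nat.choose_zero_right,
    Nat.choose_one_right, Nat.reduceAdd, Nat.reduceSub, Nat.add_one_sub_one, tsub_zero, tsub_self,
    Nat.cast_one, Nat.cast_ofNat, pow_zero, pow_one, zero_add, one_mul] at k1 k2 k3
  unfold SolvesHirzebruchAt at h ⊢
  rw [k1, k2, k3]
  linear_combination exp (l * z) ^ 2 * h

theorem hasDerivAt_sinh_div_cosh_sub_sinh {η κ z : ℂ}
    (hz : η * cosh (η * z) - κ * sinh (η * z) ≠ 0) :
    HasDerivAt (fun w => sinh (η * w) / (η * cosh (η * w) - κ * sinh (η * w)))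
      (1 + 2 * κ * (sinh (η * z) / (η * cosh (η * z) - κ * sinh (η * z)))
        + (κ ^ 2 - η ^ 2) * (sinh (η * z) / (η * cosh (η * z) - κ * sinh (η * z))) ^ 2) z := by
  have hlin : HasDerivAt (fun w => η * w) η z := by simpa using (hasDerivAt_id z).const_mul η
  have hs := hlin.csinh
  refine (hs.div ((hlin.ccosh.const_mul η).sub (hs.const_mul κ)) hz).congr_deriv ?_
  simp only [Pi.sub_apply]
  field_simp
  ring

theorem singular_krichever_satisfies_ODE_general (α κ η : ℂ)
    (φ : ℂ → ℂ)
    (hφ : ∀ z : ℂ, φ z = Complex.exp ((α - κ) * z) * Complex.sinh (η * z) /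
      (η * Complex.cosh (η * z) - κ * Complex.sinh (η * z)))
    (U : Set ℂ)
    (hU : U = {z : ℂ | η * Complex.cosh (η * z) - κ * Complex.sinh (η * z) ≠ 0})
    (q₁ q₂ q₃ : ℂ) (hq₁ : q₁ = -α) (hq₂ : 6 * q₂ = 3 * α ^ 2 - 3 * κ ^ 2 + 2 * η ^ 2)
    (hq₃ : 6 * q₃ = -((α - κ) * (α ^ 2 + κ * α - 2 * κ ^ 2 + 2 * η ^ 2))) :
    (∀ z ∈ U, AnalyticAt ℂ φ z) ∧
      ∀ z ∈ U,
        φ z * deriv (deriv (deriv φ)) z - 3 * deriv φ z * deriv (deriv φ) z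
          = 6 * q₁ * (deriv φ z) ^ 2 + 12 * q₂ * φ z * deriv φ z + 12 * q₃ * (φ z) ^ 2 := by
  set g := fun w => sinh (η * w) / (η * cosh (η * w) - κ * sinh (η * w))
  have hφg : φ = fun w => exp ((α - κ) * w) * g w :=
    funext fun w => (hφ w).trans (mul_div_assoc ..)
  have hU_open : IsOpen U := hU ▸ isOpen_ne_fun (by fun_prop) continuous_const
  have hg : ∀ z ∈ U, HasDerivAt g (1 + 2 * κ * g z + (κ ^ 2 - η ^ 2) * g z ^ 2) z :=
    fun z hz => hasDerivAt_sinh_div_cosh_sub_sinh (by rwa [hU] at hz)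
  have hg_an : ∀ z ∈ U, AnalyticAt ℂ g z := fun z hz =>
    DifferentiableOn.analyticAt (fun w hw => (hg w hw).differentiableAt.differentiableWithinAt)
      (hU_open.mem_nhds hz)
  refine ⟨fun z hz => hφg ▸ (analyticAt_cexp.comp (by fun_prop)).mul (hg_an z hz),
    fun z hz => ?_⟩
  have hφ_sol := (solvesHirzebruchAt_of_riccati _ _ _
    (eventually_of_mem (hU_open.mem_nhds hz) hg)).exp_mul (hg_an z hz).contDiffAt (α - κ)
  unfold SolvesHirzebruchAt at hφ_sol
  rw [hφg]
  convert hφ_sol using 5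
  · linear_combination hq₁
  · linear_combination 2 * hq₂
  · linear_combination hq₃ / 6

/-- The singular Krichever function
`φ(z) = exp((α - κ)z) sinh(ηz)/(η cosh(ηz) - κ sinh(ηz))` is holomorphic away from the zeros
of the denominator and satisfies the Hirzebruch differential equation there, with parameters
`q₁ = -α`, `6 q₂ = 3α² - 3κ² + 2η²`, `6 q₃ = -(α - κ)(α² + κα - 2κ² + 2η²)`. -/
theorem singular_krichever_satisfies_ODE (α κ η : ℂ) (hη : η ≠ 0)
    (φ : ℂ → ℂ)
    (hφ : ∀ z : ℂ, φ z = Complex.exp ((α - κ) * z) * Complex.sinh (η * z) /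
      (η * Complex.cosh (η * z) - κ * Complex.sinh (η * z)))
    (U : Set ℂ)
    (hU : U = {z : ℂ | η * Complex.cosh (η * z) - κ * Complex.sinh (η * z) ≠ 0})
    (q₁ q₂ q₃ : ℂ) (hq₁ : q₁ = -α) (hq₂ : 6 * q₂ = 3 * α ^ 2 - 3 * κ ^ 2 + 2 * η ^ 2)
    (hq₃ : 6 * q₃ = -((α - κ) * (α ^ 2 + κ * α - 2 * κ ^ 2 + 2 * η ^ 2))) :
    (∀ z ∈ U, AnalyticAt ℂ φ z) ∧
      ∀ z ∈ U,
        φ z * deriv (deriv (deriv φ)) z - 3 * deriv φ z * deriv (deriv φ) z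
          = 6 * q₁ * (deriv φ z) ^ 2 + 12 * q₂ * φ z * deriv φ z + 12 * q₃ * (φ z) ^ 2 :=
  singular_krichever_satisfies_ODE_general α κ η φ hφ U hU q₁ q₂ q₃ hq₁ hq₂ hq₃
end

section
/- Let a, b ∈ ℂ and define the Todd function f(z) = (exp(a·z) − exp(b·z))/(a·exp(b·z) − b·exp(a·z)) on the open set U = {z ∈ ℂ : a·exp(b·z) − b·exp(a·z) ≠ 0}. Then f is holomorphic on U and at every point of U it satisfies f·f''' − 3·f'·f'' = 6q_1·(f')² + 12q_2·f·f' + 12q_3·f², where −2q_1 = a + b, 12q_2 = (a − b)², and q_3 = 0; equivalently, f·f''' − 3·f'·f'' = −3(a + b)·(f')² + (a − b)²·f·f'. -/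
open Complex Filter Topology

/-!
A direct computation shows that the Todd function solves the Riccati equation
`f' = 1 + (a + b) f + a b f²`. Differentiating a Riccati equation `f' = c + s f + p f²` twice
expresses `f''` and `f'''` as polynomials in `f`, and after this substitution
`f f''' - 3 f' f'' + 3 s f'² - (s² - 4 p c) f f'` vanishes identically; for the Todd function
`s² - 4 p c = (a - b)²`.
-/

section Riccati

variable {𝕜 : Type*} [NontriviallyNormedField 𝕜] {f : 𝕜 → 𝕜} {U : Set 𝕜} {c s p z : 𝕜}

theorem hasDerivAt_deriv_of_riccati (hU : IsOpen U)
    (hf : ∀ w ∈ U, HasDerivAt f (c + s * f w + p * f w ^ 2) w) (hz : z ∈ U) :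
    HasDerivAt (deriv f) ((s + 2 * p * f z) * (c + s * f z + p * f z ^ 2)) z := by
  have hderiv : deriv f =ᶠ[𝓝 z] fun w => c + s * f w + p * f w ^ 2 :=
    eventually_of_mem (hU.mem_nhds hz) fun w hw => (hf w hw).deriv
  have hrhs := (((hf z hz).const_mul s).const_add c).add (((hf z hz).pow 2).const_mul p)
  refine (hrhs.congr_deriv ?_).congr_of_eventuallyEq hderiv
  push_cast
  ring

theorem hasDerivAt_deriv_deriv_of_riccati (hU : IsOpen U)
    (hf : ∀ w ∈ U, HasDerivAt f (c + s * f w + p * f w ^ 2) w) (hz : z ∈ U) :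
    HasDerivAt (deriv (deriv f))
      (2 * p * (c + s * f z + p * f z ^ 2) ^ 2
        + (s + 2 * p * f z) ^ 2 * (c + s * f z + p * f z ^ 2)) z := by
  have hderiv2 : deriv (deriv f) =ᶠ[𝓝 z] fun w => (s + 2 * p * f w) * deriv f w :=
    eventually_of_mem (hU.mem_nhds hz) fun w hw => by
      simp only [(hasDerivAt_deriv_of_riccati hU hf hw).deriv, (hf w hw).deriv]
  have hrhs := (((hf z hz).const_mul (2 * p)).const_add s).mul
    (hasDerivAt_deriv_of_riccati hU hf hz)
  refine (hrhs.congr_deriv ?_).congr_of_eventuallyEq hderiv2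
  rw [(hf z hz).deriv]
  ring

/-- A solution of the Riccati equation `f' = c + s f + p f²` satisfies the Hirzebruch equation
with `-2 q₁ = s`, `12 q₂ = s² - 4 p c`, `q₃ = 0`. -/
theorem hirzebruch_of_riccati (hU : IsOpen U)
    (hf : ∀ w ∈ U, HasDerivAt f (c + s * f w + p * f w ^ 2) w) (hz : z ∈ U) :
    f z * deriv (deriv (deriv f)) z - 3 * deriv f z * deriv (deriv f) z
      = -3 * s * deriv f z ^ 2 + (s ^ 2 - 4 * p * c) * f z * deriv f z := by
  rw [(hasDerivAt_deriv_deriv_of_riccati hU hf hz).deriv,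
    (hasDerivAt_deriv_of_riccati hU hf hz).deriv, (hf z hz).deriv]
  ring

end Riccati

noncomputable def toddFunction (a b z : ℂ) : ℂ :=
  (exp (a * z) - exp (b * z)) / (a * exp (b * z) - b * exp (a * z))

section Todd

variable {a b z : ℂ}

theorem analyticAt_toddFunction (hz : a * exp (b * z) - b * exp (a * z) ≠ 0) :
    AnalyticAt ℂ (toddFunction a b) z := by
  unfold toddFunction
  fun_prop (disch := exact hz)

theorem hasDerivAt_toddFunction (hz : a * exp (b * z) - b * exp (a * z) ≠ 0) :
    HasDerivAt (toddFunction a b)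
      (1 + (a + b) * toddFunction a b z + a * b * toddFunction a b z ^ 2) z := by
  have hexp (c : ℂ) : HasDerivAt (fun w => exp (c * w)) (c * exp (c * z)) z := by
    simpa only [id, mul_one, mul_comm (exp _)] using ((hasDerivAt_id z).const_mul c).cexp
  refine (((hexp a).sub (hexp b)).div (((hexp b).const_mul a).sub ((hexp a).const_mul b))
    hz).congr_deriv ?_
  simp only [Pi.sub_apply, toddFunction]
  generalize exp (a * z) = u, exp (b * z) = v at hz ⊢
  -- `field_simp` only recognises the denominator in its own normal form `a * v - u * b`
  rw [mul_comm b u] at hz ⊢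
  field_simp
  ring

end Todd

theorem isOpen_setOf_toddDenominator_ne_zero (a b : ℂ) :
    IsOpen {z : ℂ | a * exp (b * z) - b * exp (a * z) ≠ 0} :=
  isOpen_ne_fun (by fun_prop) continuous_const

/-- The Todd function `f(z) = (e^{az} - e^{bz})/(a e^{bz} - b e^{az})` is holomorphic away
from the zeros of the denominator and satisfies the Hirzebruch differential equation there,
with parameters `-2q₁ = a + b`, `12 q₂ = (a - b)²`, `q₃ = 0`:
`f f''' - 3 f' f'' = -3(a + b)(f')² + (a - b)² f f'`. -/
theorem todd_function_satisfies_ODE (a b : ℂ)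
    (f : ℂ → ℂ)
    (hf : ∀ z : ℂ, f z = (Complex.exp (a * z) - Complex.exp (b * z)) /
      (a * Complex.exp (b * z) - b * Complex.exp (a * z)))
    (U : Set ℂ)
    (hU : U = {z : ℂ | a * Complex.exp (b * z) - b * Complex.exp (a * z) ≠ 0}) :
    (∀ z ∈ U, AnalyticAt ℂ f z) ∧
      ∀ z ∈ U,
        f z * deriv (deriv (deriv f)) z - 3 * deriv f z * deriv (deriv f) z
          = -3 * (a + b) * (deriv f z) ^ 2 + (a - b) ^ 2 * f z * deriv f z := by
  obtain rfl : f = toddFunction a b := funext hf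
  subst hU
  refine ⟨fun z hz => analyticAt_toddFunction hz, fun z hz => ?_⟩
  have hODE := hirzebruch_of_riccati (isOpen_setOf_toddDenominator_ne_zero a b)
    (fun w hw => hasDerivAt_toddFunction hw) hz
  linear_combination hODE
end

section
/- Let n ≥ 1 be an integer and let z_1, …, z_n ∈ ℂ be such that sinh(z_j − z_i) ≠ 0 for all i ≠ j. Then ∑_{i=1}^n ∏_{j≠i} cosh(z_j − z_i)/sinh(z_j − z_i) = 1 if n is odd, and = 0 if n is even. In other words, ∑_{i=1}^n ∏_{j≠i} coth(z_j − z_i) equals 1 for odd n and 0 for even n. -/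
open Complex Finset

open Polynomial in
lemma key_sum_s16 (n : ℕ) (x : Fin n → ℂ) (hx0 : ∀ i, x i ≠ 0) (hinj : Function.Injective x) :
    ∑ i : Fin n, ∏ j ∈ univ.erase i, (x j + x i) / (x j - x i)
      = if Odd n then 1 else 0 := by
  classical
  rcases Nat.eq_zero_or_pos n with rfl | hn
  · simp
  have hxne : ∀ i j : Fin n, j ≠ i → x i - x j ≠ 0 := by
    intro i j h
    exact sub_ne_zero.mpr fun e => h (hinj e.symm)
  set P : ℂ[X] := ∏ j : Fin n, (X + C (x j)) with hP
  set Q : ℂ[X] := ∏ j : Fin n, (X - C (x j)) with hQ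
  have hPm : P.Monic := monic_prod_of_monic _ _ fun j _ => monic_X_add_C _
  have hQm : Q.Monic := monic_prod_of_monic _ _ fun j _ => monic_X_sub_C _
  have hPdeg : P.degree = n := by
    rw [hP, degree_prod]
    simp
  have hQdeg : Q.degree = n := by
    rw [hQ, degree_prod]
    simp
  have hlt : (P - Q).degree < (#(univ : Finset (Fin n)) : ℕ) := by
    rw [card_univ, Fintype.card_fin]
    have h := degree_sub_lt (hPdeg.trans hQdeg.symm) hPm.ne_zero
      (by rw [hPm.leadingCoeff, hQm.leadingCoeff])
    rwa [hPdeg] at h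
  have hInt := Lagrange.eq_interpolate (v := x) hinj.injOn hlt
  have hEval := congrArg (Polynomial.eval (0 : ℂ)) hInt
  rw [Lagrange.interpolate_apply] at hEval
  simp only [eval_finset_sum, eval_mul, eval_C] at hEval
  -- compute eval 0 (P - Q)
  have hPQ0 : (P - Q).eval 0 = (1 - (-1)^n) * ∏ j, x j := by
    simp only [eval_sub, hP, hQ, eval_prod, eval_add, eval_sub, eval_X, eval_C, zero_add,
      zero_sub]
    have hneg : ∏ j : Fin n, -x j = (-1)^n * ∏ j : Fin n, x j := by
      rw [Finset.prod_congr rfl (fun j _ => (neg_eq_neg_one_mul (x j) : -x j = -1 * x j))]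
      rw [Finset.prod_mul_distrib, Finset.prod_const, card_univ, Fintype.card_fin]
    rw [hneg]; ring
  -- compute each term
  have hterm : ∀ i : Fin n, (P - Q).eval (x i) *
      Polynomial.eval 0 (Lagrange.basis univ x i)
      = (2 * ∏ j, x j) * ∏ j ∈ univ.erase i, (x j + x i) / (x j - x i) := by
    intro i
    have hQ0 : Q.eval (x i) = 0 := by
      rw [hQ, eval_prod]
      exact Finset.prod_eq_zero (mem_univ i) (by simp)
    have hPe : P.eval (x i) = (2 * x i) * ∏ j ∈ univ.erase i, (x i + x j) := by
      rw [hP, eval_prod]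
      simp only [eval_add, eval_X, eval_C]
      rw [← Finset.mul_prod_erase _ _ (mem_univ i)]
      ring
    have hB : Polynomial.eval 0 (Lagrange.basis univ x i)
        = ∏ j ∈ univ.erase i, ((x i - x j)⁻¹ * (0 - x j)) := by
      rw [Lagrange.basis, eval_prod]
      refine Finset.prod_congr rfl fun j hj => ?_
      simp [Lagrange.basisDivisor]
    rw [eval_sub, hQ0, sub_zero, hPe, hB, mul_assoc, ← Finset.prod_mul_distrib]
    have : ∀ j ∈ univ.erase i, (x i + x j) * ((x i - x j)⁻¹ * (0 - x j))
        = x j * ((x j + x i) / (x j - x i)) := by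
      intro j hj
      have h1 : x i - x j ≠ 0 := hxne i j (mem_erase.mp hj).1
      have h2 : x j - x i ≠ 0 := hxne j i (fun e => (mem_erase.mp hj).1 e.symm)
      field_simp
      ring
    rw [Finset.prod_congr rfl this, Finset.prod_mul_distrib,
      ← Finset.mul_prod_erase _ x (mem_univ i)]
    ring
  rw [Finset.sum_congr rfl (fun i _ => hterm i), ← Finset.mul_sum] at hEval
  have hprodne : (∏ j, x j) ≠ 0 := Finset.prod_ne_zero_iff.mpr fun j _ => hx0 j
  have h2 : (2 * ∏ j, x j) ≠ 0 := by
    exact mul_ne_zero two_ne_zero hprodne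
  rw [hPQ0] at hEval
  rcases Nat.even_or_odd n with he | ho
  · rw [if_neg (by simpa using he)]
    rw [he.neg_one_pow] at hEval
    have : (2 * ∏ j, x j) * (∑ i : Fin n, ∏ j ∈ univ.erase i, (x j + x i) / (x j - x i)) = 0 := by
      rw [← hEval]; ring
    exact (mul_eq_zero.mp this).resolve_left h2
  · rw [if_pos ho]
    rw [ho.neg_one_pow] at hEval
    have : (2 * ∏ j, x j) * (∑ i : Fin n, ∏ j ∈ univ.erase i, (x j + x i) / (x j - x i))
        = (2 * ∏ j, x j) * 1 := by
      rw [← hEval]; ring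
    exact mul_left_cancel₀ h2 this

lemma coth_ratio (u v : ℂ) (h : Complex.sinh (v - u) ≠ 0) :
    Complex.cosh (v - u) / Complex.sinh (v - u)
      = (Complex.exp (2*v) + Complex.exp (2*u)) / (Complex.exp (2*v) - Complex.exp (2*u)) := by
  have ha : Complex.exp (v - u) ≠ 0 := Complex.exp_ne_zero _
  have hc : Complex.exp (u + v) ≠ 0 := Complex.exp_ne_zero _
  have e1 : Complex.exp (2*v) = Complex.exp (v - u) * Complex.exp (u + v) := by
    rw [← Complex.exp_add]; ring_nf
  have e2 : Complex.exp (2*u) = (Complex.exp (v - u))⁻¹ * Complex.exp (u + v) := by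
    rw [← Complex.exp_neg, ← Complex.exp_add]; ring_nf
  have hd : Complex.exp (v - u) - (Complex.exp (v - u))⁻¹ ≠ 0 := by
    intro h0
    apply h
    rw [Complex.sinh, Complex.exp_neg, h0, zero_div]
  rw [Complex.cosh, Complex.sinh, Complex.exp_neg, e1, e2]
  rw [div_div_div_cancel_right₀ (two_ne_zero),
    show cexp (v - u) * cexp (u + v) + (cexp (v - u))⁻¹ * cexp (u + v)
      = cexp (u + v) * (cexp (v - u) + (cexp (v - u))⁻¹) by ring,
    show cexp (v - u) * cexp (u + v) - (cexp (v - u))⁻¹ * cexp (u + v)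
      = cexp (u + v) * (cexp (v - u) - (cexp (v - u))⁻¹) by ring,
    mul_div_mul_left _ _ hc]

/-- `∑_{i} ∏_{j ≠ i} coth(z_j - z_i)` equals `1` for odd `n` and `0` for even `n`. -/
theorem sum_prod_coth (n : ℕ) (hn : 1 ≤ n) (z : Fin n → ℂ)
    (hz : ∀ i j : Fin n, i ≠ j → Complex.sinh (z j - z i) ≠ 0) :
    ∑ i : Fin n, ∏ j ∈ univ.erase i, Complex.cosh (z j - z i) / Complex.sinh (z j - z i)
      = if Odd n then 1 else 0 := by
  have hinj : Function.Injective (fun i => Complex.exp (2 * z i)) := by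
    intro i j hij
    by_contra hne
    apply hz i j hne
    simp only at hij
    have key : Complex.exp (z j - z i) = Complex.exp (z i - z j) := by
      rw [show z j - z i = 2 * z j + -(z i + z j) by ring,
        show z i - z j = 2 * z i + -(z i + z j) by ring,
        Complex.exp_add, Complex.exp_add, hij]
    rw [Complex.sinh, key, neg_sub]
    simp
  rw [← key_sum_s16 n (fun i => Complex.exp (2 * z i)) (fun i => Complex.exp_ne_zero _) hinj]
  refine Finset.sum_congr rfl fun i _ => Finset.prod_congr rfl fun j hj => ?_
  have hij : i ≠ j := fun e => (Finset.mem_erase.mp hj).1 e.symm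
  exact coth_ratio (z i) (z j) (hz i j hij)
end

section
/- Let c ∈ ℂ and let f : ℂ → ℂ be analytic at 0 with f(0) = 0 and f′(0) = 1. Suppose that for all z ≠ 0 in some punctured neighborhood of 0 one has f(z) ≠ 0, f(−z) ≠ 0, and 1/f(z) + 1/f(−z) = c (this is the Hirzebruch functional equation for n = 2 with constant c). Then there exists a function g : ℂ → ℂ analytic at 0 with g(0) = 1 such that f(z) = 2z/(c·z + 2·g(z²)) for all z in some neighborhood of 0. -/
open Filter Topology

/-- The general analytic solution of the Hirzebruch functional equation for `n = 2`:
if `1/f(z) + 1/f(-z) = c` near `0`, then `f(z) = 2z/(cz + 2g(z²))` for some function `g`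
analytic at `0` with `g(0) = 1`. -/
theorem hirzebruch_n2_solution (c : ℂ) (f : ℂ → ℂ)
    (hf : AnalyticAt ℂ f 0) (hf0 : f 0 = 0) (hf1 : deriv f 0 = 1)
    (heq : ∀ᶠ z in 𝓝[≠] (0 : ℂ), f z ≠ 0 ∧ f (-z) ≠ 0 ∧ 1 / f z + 1 / f (-z) = c) :
    ∃ g : ℂ → ℂ, AnalyticAt ℂ g 0 ∧ g 0 = 1 ∧
      ∀ᶠ z in 𝓝 (0 : ℂ), f z = 2 * z / (c * z + 2 * g (z ^ 2)) := by
  obtain ⟨p, hp⟩ := hf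
  have hu : HasFPowerSeriesAt (dslope f 0) p.fslope 0 :=
    hp.has_fpower_series_dslope_fslope
  have hu0 : dslope f 0 0 = 1 := by rw [dslope_same, hf1]
  -- h = z / f z, analytic, h 0 = 1
  set h : ℂ → ℂ := fun z => (dslope f 0 z)⁻¹ with hh_def
  have hh : AnalyticAt ℂ h 0 := hu.analyticAt.inv (by rw [hu0]; exact one_ne_zero)
  have hh0 : h 0 = 1 := by simp [hh_def, hf1]
  have hformula : ∀ z : ℂ, z ≠ 0 → h z = z * (f z)⁻¹ := by
    intro z hz
    simp only [hh_def, dslope_of_ne f hz, slope_def_field, hf0, sub_zero, div_eq_mul_inv,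
      mul_inv, inv_inv]
    ring
  -- the even function e
  set e : ℂ → ℂ := fun z => h z - c / 2 * z with he_def
  have he : AnalyticAt ℂ e 0 :=
    hh.sub ((analyticAt_const.mul analyticAt_id))
  have he0 : e 0 = 1 := by simp [he_def, hh0]
  -- e is even near 0
  have heq' : ∀ᶠ z in 𝓝 (0 : ℂ), z ≠ 0 →
      (f z ≠ 0 ∧ f (-z) ≠ 0 ∧ 1 / f z + 1 / f (-z) = c) := by
    simpa [eventually_nhdsWithin_iff] using heq
  have heven : ∀ᶠ z in 𝓝 (0 : ℂ), e (-z) = e z := by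
    filter_upwards [heq'] with z hz
    rcases eq_or_ne z 0 with rfl | hz0
    · simp
    obtain ⟨hfz, hfz', hceq⟩ := hz hz0
    have h1 : h z = z * (f z)⁻¹ := hformula z hz0
    have h2 : h (-z) = -z * (f (-z))⁻¹ := hformula (-z) (neg_ne_zero.mpr hz0)
    have : h z - h (-z) = c * z := by
      rw [h1, h2, ← hceq]
      field_simp
      ring
    simp only [he_def]
    linear_combination -this
  -- power series of e
  obtain ⟨q, hq⟩ := he
  have hq0 : q.coeff 0 = 1 := by
    rw [← he0]; exact hq.coeff_zero 1
  have hsum : ∀ᶠ z in 𝓝 (0 : ℂ), HasSum (fun n => z ^ n • q.coeff n) (e z) := by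
    have := hasFPowerSeriesAt_iff.mp hq
    simpa using this
  -- get a common radius
  obtain ⟨r, hr0, hr⟩ : ∃ r > 0, ∀ z : ℂ, ‖z‖ < r →
      (HasSum (fun n => z ^ n • q.coeff n) (e z) ∧ e (-z) = e z) := by
    have := hsum.and heven
    rw [Metric.eventually_nhds_iff] at this
    obtain ⟨r, hr0, hr⟩ := this
    exact ⟨r, hr0, fun z hz => hr (by simpa using hz)⟩
  -- the symmetrized coefficients
  set a : ℕ → ℂ := fun n => (q.coeff n + (-1) ^ n * q.coeff n) / 2 with ha_def
  have ha_odd : ∀ n, ¬ Even n → a n = 0 := by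
    intro n hn
    have : (-1 : ℂ) ^ n = -1 := Odd.neg_one_pow (Nat.not_even_iff_odd.mp hn)
    simp [ha_def, this]
  have ha_sum : ∀ z : ℂ, ‖z‖ < r → HasSum (fun n => z ^ n • a n) (e z) := by
    intro z hz
    have h1 := (hr z hz).1
    have h2 := (hr (-z) (by simpa using hz)).1
    rw [(hr z hz).2] at h2
    have key := (h1.add h2).div_const 2
    rw [show (e z + e z) / 2 = e z by ring] at key
    have hfun : (fun n => (z ^ n • q.coeff n + (-z) ^ n • q.coeff n) / 2)
        = fun n => z ^ n • a n := by
      funext n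
      have : (-z) ^ n = (-1) ^ n * z ^ n := by rw [neg_pow]
      simp only [smul_eq_mul, ha_def, this]
      ring
    rwa [hfun] at key
  -- sum over even indices only
  have hb_sum : ∀ z : ℂ, ‖z‖ < r → HasSum (fun n => (z ^ 2) ^ n • a (2 * n)) (e z) := by
    intro z hz
    have hinj : Function.Injective (fun n : ℕ => 2 * n) := fun m n hmn => by simpa using hmn
    have hvan : ∀ m ∉ Set.range (fun n : ℕ => 2 * n), z ^ m • a m = 0 := by
      intro m hm
      have : ¬ Even m := by
        simp only [Set.mem_range, not_exists] at hm
        rintro ⟨k, hk⟩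
        exact hm k (by omega)
      rw [ha_odd m this, smul_zero]
    have key := (hinj.hasSum_iff hvan).mpr (ha_sum z hz)
    have hfun : ((fun m => z ^ m • a m) ∘ fun n => 2 * n)
        = fun n => (z ^ 2) ^ n • a (2 * n) := by
      funext n
      simp [Function.comp, ← pow_mul]
    rwa [hfun] at key
  -- define g
  set g : ℂ → ℂ := fun w => ∑' n, w ^ n • a (2 * n) with hg_def
  have hg_eq : ∀ z : ℂ, ‖z‖ < r → g (z ^ 2) = e z := by
    intro z hz
    exact (hb_sum z hz).tsum_eq
  have hg_at : ∀ w : ℂ, ‖w‖ < r ^ 2 → HasSum (fun n => w ^ n • a (2 * n)) (g w) := by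
    intro w hw
    obtain ⟨z, hz⟩ := IsAlgClosed.exists_pow_nat_eq w (n := 2) zero_lt_two
    have hzr : ‖z‖ < r := by
      refine lt_of_pow_lt_pow_left₀ 2 hr0.le ?_
      rwa [← norm_pow, hz]
    have := hb_sum z hzr
    rw [← hg_eq z hzr, hz] at this
    exact this
  have hg : AnalyticAt ℂ g 0 := by
    refine HasFPowerSeriesAt.analyticAt (p := FormalMultilinearSeries.ofScalars ℂ
      (fun n => a (2 * n))) ?_
    rw [hasFPowerSeriesAt_iff]
    rw [Metric.eventually_nhds_iff]
    refine ⟨r ^ 2, by positivity, fun {w} hw => ?_⟩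
    have : ∀ n, (FormalMultilinearSeries.ofScalars ℂ (fun n => a (2 * n))).coeff n
        = a (2 * n) := by
      intro n
      show (FormalMultilinearSeries.ofScalars ℂ (fun n => a (2 * n))) n (fun _ => 1) = a (2 * n)
      rw [FormalMultilinearSeries.ofScalars_apply_eq]
      simp
    have h2 := hg_at w (by simpa [dist_eq_norm] using hw)
    rw [zero_add]
    have hfun : (fun n => w ^ n •
        (FormalMultilinearSeries.ofScalars ℂ (fun n => a (2 * n))).coeff n)
        = fun n => w ^ n • a (2 * n) := by
      funext n
      rw [this n]
    rwa [hfun]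
  have hg0 : g 0 = 1 := by
    have := hg_eq 0 (by simpa using hr0)
    simpa [he0] using this
  refine ⟨g, hg, hg0, ?_⟩
  -- h nonzero near 0
  have hne : ∀ᶠ z in 𝓝 (0 : ℂ), h z ≠ 0 := by
    have : ContinuousAt h 0 := hh.continuousAt
    have := this.eventually_ne (by rw [hh0]; exact one_ne_zero)
    exact this
  have hball : ∀ᶠ z in 𝓝 (0 : ℂ), ‖z‖ < r := by
    have : Metric.ball (0 : ℂ) r ∈ 𝓝 (0 : ℂ) := Metric.ball_mem_nhds 0 hr0
    filter_upwards [this] with z hz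
    simpa [dist_eq_norm] using hz
  filter_upwards [hne, hball, heq'] with z hhz hzr hP
  have hge : g (z ^ 2) = e z := hg_eq z hzr
  have hsum2 : c * z + 2 * g (z ^ 2) = 2 * h z := by
    rw [hge]; simp only [he_def]; ring
  rw [hsum2]
  rcases eq_or_ne z 0 with rfl | hz0
  · simp [hf0]
  · obtain ⟨hfz, -, -⟩ := hP hz0
    rw [hformula z hz0] at hhz ⊢
    field_simp
end
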